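/- arXiv:math/0505176 — 9 statements merged into one kernel-verified Lean document; each statement's English description precedes it below -/
import Mathlib

section
/- Let S be a set and (x_n) a bounded sequence in ℓ^∞(S). Let Λ be the set of sequences (λ_n) in [0,1]^ℕ with ∑ λ_n = 1. If for every (λ_n) ∈ Λ the function ∑_n λ_n x_n attains its supremum on S, then inf{ sup_S ∑_n λ_n x_n : (λ_n) ∈ Λ } ≤ sup_{s ∈ S} limsup_n x_n(s). -/
open Filter

/-!
Fix `ε > 0` and write `F λ = ∑ₖ λₖ xₖ`. Choose tail weights `w₀, w₁, …` (`wₙ` supported on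
`[n, ∞)`) greedily: `wₙ` minimises `sup_S (Vₙ + 2⁻ⁿ F wₙ)` up to `ε 4⁻ⁿ`, where
`Vₙ = ∑_{i<n} 2^{-(i+1)} F wᵢ`. The mixtures `μₙ = ∑ᵢ 2^{-(i+1)} w_{n+i}` are tail weights with
`μₙ = (wₙ + μₙ₊₁) / 2` and `F μ₀ = Vₙ + 2⁻ⁿ F μₙ`. If `F μ₀` attains its supremum `σ` at `b`,
comparing `wₙ` with `μₙ` at `b` gives `F μₙ b ≤ F μₙ₊₁ b + ε 2⁻ⁿ`, so `F μₙ b ≥ σ - 2ε` for all `n`.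
Since `μₙ` only involves the `xₖ` with `k ≥ n`, this forces `limsupₖ xₖ b ≥ σ - 2ε`.
-/

lemma min_zero_le_iSup {ι : Sort*} (f : ι → ℝ) (i : ι) : min 0 (f i) ≤ ⨆ j, f j := by
  by_cases hf : BddAbove (Set.range f)
  · exact (min_le_right _ _).trans (le_ciSup hf i)
  · rw [Real.iSup_of_not_bddAbove hf]
    exact min_le_left _ _

lemma ciSup_eq_of_forall_le_apply {ι α : Type*} [ConditionallyCompleteLinearOrder α] {f : ι → α}
    {i₀ : ι} (h : ∀ i, f i ≤ f i₀) : ⨆ i, f i = f i₀ :=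
  have : Nonempty ι := ⟨i₀⟩
  ciSup_eq_of_forall_le_of_forall_lt_exists_gt h fun _ hlt => ⟨i₀, hlt⟩

lemma sub_two_mul_le_of_le_succ_add {a : ℕ → ℝ} {ε : ℝ} (hε : 0 ≤ ε)
    (h : ∀ n, a n ≤ a (n + 1) + ε * (1 / 2) ^ n) (n : ℕ) : a 0 - 2 * ε ≤ a n := by
  have : a 0 - a n ≤ ε * 2 := calc
    a 0 - a n = ∑ i ∈ Finset.range n, (a i - a (i + 1)) := (Finset.sum_range_sub' a n).symm
    _ ≤ ∑ i ∈ Finset.range n, ε * (1 / 2) ^ i := Finset.sum_le_sum fun i _ => by linarith [h i]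
    _ = ε * ∑ i ∈ Finset.range n, (1 / 2 : ℝ) ^ i := (Finset.mul_sum ..).symm
    _ ≤ ε * 2 := mul_le_mul_of_nonneg_left (sum_geometric_two_le n) hε
  linarith

lemma hasSum_half_pow_succ : HasSum (fun i : ℕ => (1 / 2 : ℝ) ^ (i + 1)) 1 := by
  simpa [pow_succ, div_eq_mul_inv, mul_comm] using hasSum_geometric_two' 1

structure IsTailWeight (n : ℕ) (l : ℕ → ℝ) : Prop where
  nonneg : ∀ k, 0 ≤ l k
  eq_zero_of_lt : ∀ k < n, l k = 0
  hasSum : HasSum l 1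

namespace IsTailWeight

variable {n : ℕ} {l : ℕ → ℝ}

lemma summable (h : IsTailWeight n l) : Summable l := h.hasSum.summable

lemma le_one (h : IsTailWeight n l) (k : ℕ) : l k ≤ 1 :=
  le_hasSum h.hasSum k fun j _ => h.nonneg j

lemma dirac (n : ℕ) : IsTailWeight n fun k => if k = n then 1 else 0 where
  nonneg k := by split_ifs <;> norm_num
  eq_zero_of_lt k hk := if_neg hk.ne
  hasSum := hasSum_ite_eq n 1

lemma zero_iff : IsTailWeight 0 l ↔ (∀ k, 0 ≤ l k ∧ l k ≤ 1) ∧ HasSum l 1 :=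
  ⟨fun h => ⟨fun k => ⟨h.nonneg k, h.le_one k⟩, h.hasSum⟩,
    fun h => ⟨fun k => (h.1 k).1, fun _ hk => absurd hk (Nat.not_lt_zero _), h.2⟩⟩

end IsTailWeight

noncomputable def weightedSum {S : Type*} (x : ℕ → S → ℝ) (l : ℕ → ℝ) (s : S) : ℝ :=
  ∑' k, l k * x k s

section WeightedSum

variable {S : Type*} {x : ℕ → S → ℝ} {C : ℝ} {n : ℕ} {l : ℕ → ℝ} {s : S}

lemma summable_mul_of_abs_le (hbdd : ∀ n s, |x n s| ≤ C) (hl : Summable l) (s : S) :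
    Summable fun k => l k * x k s :=
  Summable.of_norm_bounded (hl.abs.mul_right C) fun k => by
    rw [Real.norm_eq_abs, abs_mul]
    exact mul_le_mul_of_nonneg_left (hbdd k s) (abs_nonneg _)

lemma weightedSum_add (hbdd : ∀ n s, |x n s| ≤ C) {l' : ℕ → ℝ} (hl : Summable l)
    (hl' : Summable l') (a b : ℝ) (s : S) :
    weightedSum x (fun k => a * l k + b * l' k) s = a * weightedSum x l s + b * weightedSum x l' s := by
  simp only [weightedSum, add_mul, mul_assoc]
  rw [((summable_mul_of_abs_le hbdd hl s).mul_left a).tsum_add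
    ((summable_mul_of_abs_le hbdd hl' s).mul_left b), tsum_mul_left, tsum_mul_left]

lemma weightedSum_le_of_le (hbdd : ∀ n s, |x n s| ≤ C) (hl : IsTailWeight n l) {t : ℝ}
    (ht : ∀ k, n ≤ k → x k s ≤ t) : weightedSum x l s ≤ t := by
  refine (Summable.tsum_le_tsum (fun k => ?_) (summable_mul_of_abs_le hbdd hl.summable s)
    (hl.summable.mul_right t)).trans_eq (by rw [tsum_mul_right, hl.hasSum.tsum_eq, one_mul])
  rcases lt_or_ge k n with hk | hk
  · simp [hl.eq_zero_of_lt k hk]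
  · exact mul_le_mul_of_nonneg_left (ht k hk) (hl.nonneg k)

lemma le_weightedSum_of_le (hbdd : ∀ n s, |x n s| ≤ C) (hl : IsTailWeight n l) {t : ℝ}
    (ht : ∀ k, n ≤ k → t ≤ x k s) : t ≤ weightedSum x l s := by
  refine (Eq.trans_le (by rw [tsum_mul_right, hl.hasSum.tsum_eq, one_mul]) (Summable.tsum_le_tsum
    (fun k => ?_) (hl.summable.mul_right t) (summable_mul_of_abs_le hbdd hl.summable s)))
  rcases lt_or_ge k n with hk | hk
  · simp [hl.eq_zero_of_lt k hk]
  · exact mul_le_mul_of_nonneg_left (ht k hk) (hl.nonneg k)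

lemma abs_weightedSum_le (hbdd : ∀ n s, |x n s| ≤ C) (hl : IsTailWeight n l) (s : S) :
    |weightedSum x l s| ≤ C :=
  abs_le.2 ⟨le_weightedSum_of_le hbdd hl fun k _ => neg_le_of_abs_le (hbdd k s),
    weightedSum_le_of_le hbdd hl fun k _ => le_of_abs_le (hbdd k s)⟩

lemma neg_le_iSup_weightedSum [Nonempty S] (hbdd : ∀ n s, |x n s| ≤ C) (hl : IsTailWeight n l) :
    -C ≤ ⨆ s, weightedSum x l s := by
  obtain ⟨s₀⟩ := ‹Nonempty S›
  have hbddAbove : BddAbove (Set.range (weightedSum x l)) :=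
    ⟨C, by rintro _ ⟨s, rfl⟩; exact le_of_abs_le (abs_weightedSum_le hbdd hl s)⟩
  exact le_ciSup_of_le hbddAbove s₀ (neg_le_of_abs_le (abs_weightedSum_le hbdd hl s₀))

lemma le_limsup_of_forall_exists_isTailWeight (hbdd : ∀ n s, |x n s| ≤ C) {t : ℝ}
    (h : ∀ n, ∃ l, IsTailWeight n l ∧ t ≤ weightedSum x l s) :
    t ≤ limsup (fun k => x k s) atTop := by
  refine le_of_forall_pos_le_add fun δ hδ => ?_
  have hfreq : ∃ᶠ k in atTop, t - δ ≤ x k s := frequently_atTop.2 fun n => by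
    obtain ⟨l, hl, htl⟩ := h n
    by_contra! hlt
    linarith [weightedSum_le_of_le hbdd hl fun k hk => (hlt k hk).le]
  linarith [le_limsup_of_frequently_le hfreq (isBoundedUnder_of ⟨C, fun k => le_of_abs_le (hbdd k s)⟩)]

lemma exists_isTailWeight_iSup_le_add [Nonempty S] (hbdd : ∀ n s, |x n s| ≤ C) (V : S → ℝ)
    {c : ℝ} (hc : 0 ≤ c) (n : ℕ) {δ : ℝ} (hδ : 0 < δ) :
    ∃ l, IsTailWeight n l ∧ ∀ w, IsTailWeight n w →
      ⨆ s, V s + c * weightedSum x l s ≤ (⨆ s, V s + c * weightedSum x w s) + δ := by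
  obtain ⟨s₀⟩ := ‹Nonempty S›
  set Φ : (ℕ → ℝ) → ℝ := fun w => ⨆ s, V s + c * weightedSum x w s
  -- `Φ` is bounded below on tail weights whether or not `V` is bounded above, since `⨆` is `0` then
  have hΦ : ∀ w, IsTailWeight n w → min 0 (V s₀ - c * C) ≤ Φ w := fun w hw => by
    refine (min_le_min_left 0 ?_).trans (min_zero_le_iSup _ s₀)
    nlinarith [neg_le_of_abs_le (abs_weightedSum_le hbdd hw s₀)]
  obtain ⟨_, ⟨l, hl, rfl⟩, hlt⟩ := Real.lt_sInf_add_pos (s := Φ '' {w | IsTailWeight n w})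
    ⟨_, _, IsTailWeight.dirac n, rfl⟩ hδ
  refine ⟨l, hl, fun w hw => show Φ l ≤ Φ w + δ from ?_⟩
  exact hlt.le.trans (add_le_add_left (csInf_le ⟨_, Set.forall_mem_image.2 hΦ⟩ ⟨w, hw, rfl⟩) δ)

end WeightedSum

noncomputable def geomMix (w : ℕ → ℕ → ℝ) (n k : ℕ) : ℝ :=
  ∑' i, (1 / 2 : ℝ) ^ (i + 1) * w (n + i) k

section GeomMix

variable {w : ℕ → ℕ → ℝ}

lemma summable_geomMix (hw : ∀ n, IsTailWeight n (w n)) (n k : ℕ) :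
    Summable fun i => (1 / 2 : ℝ) ^ (i + 1) * w (n + i) k :=
  hasSum_half_pow_succ.summable.of_nonneg_of_le
    (fun i => mul_nonneg (by positivity) ((hw _).nonneg k))
    (fun i => mul_le_of_le_one_right (by positivity) ((hw _).le_one k))

lemma geomMix_eq_midpoint (hw : ∀ n, IsTailWeight n (w n)) (n k : ℕ) :
    geomMix w n k = 1 / 2 * w n k + 1 / 2 * geomMix w (n + 1) k := by
  rw [geomMix, (summable_geomMix hw n k).tsum_eq_zero_add, geomMix]
  have hshift : ∀ i, (1 / 2 : ℝ) ^ (i + 1 + 1) * w (n + (i + 1)) k =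
      1 / 2 * ((1 / 2) ^ (i + 1) * w (n + 1 + i) k) := fun i => by
    rw [show n + (i + 1) = n + 1 + i by omega]
    ring
  rw [tsum_congr hshift, tsum_mul_left]
  simp only [add_zero]
  ring

lemma isTailWeight_geomMix (hw : ∀ n, IsTailWeight n (w n)) (n : ℕ) :
    IsTailWeight n (geomMix w n) where
  nonneg k := tsum_nonneg fun i => mul_nonneg (by positivity) ((hw _).nonneg k)
  eq_zero_of_lt k hk := (tsum_congr fun i => by
    rw [(hw (n + i)).eq_zero_of_lt k (by omega), mul_zero]).trans tsum_zero
  hasSum := by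
    set g : ℕ × ℕ → ℝ := fun p => (1 / 2 : ℝ) ^ (p.1 + 1) * w (n + p.1) p.2
    have hrow : ∀ i, HasSum (fun k => g (i, k)) ((1 / 2 : ℝ) ^ (i + 1)) := fun i => by
      simpa only [mul_one] using (hw (n + i)).hasSum.mul_left ((1 / 2 : ℝ) ^ (i + 1))
    have hg : Summable g := (summable_prod_of_nonneg fun p =>
      mul_nonneg (by positivity) ((hw _).nonneg _)).2
        ⟨fun i => (hrow i).summable, hasSum_half_pow_succ.summable.congr fun i => (hrow i).tsum_eq.symm⟩
    have hg1 : HasSum g 1 := by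
      rw [← hasSum_half_pow_succ.tsum_eq, ← tsum_congr fun i => (hrow i).tsum_eq, ← hg.tsum_prod]
      exact hg.hasSum
    exact ((Equiv.prodComm ℕ ℕ).hasSum_iff.2 hg1).prod_fiberwise fun k =>
      (summable_geomMix hw n k).hasSum

end GeomMix

section GreedyMix

variable {S : Type*} {x : ℕ → S → ℝ} {C : ℝ} {w : ℕ → ℕ → ℝ} {V : ℕ → S → ℝ}

lemma weightedSum_geomMix_eq_midpoint (hbdd : ∀ n s, |x n s| ≤ C)
    (hw : ∀ n, IsTailWeight n (w n)) (n : ℕ) (s : S) :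
    weightedSum x (geomMix w n) s =
      1 / 2 * weightedSum x (w n) s + 1 / 2 * weightedSum x (geomMix w (n + 1)) s := by
  rw [funext (geomMix_eq_midpoint hw n)]
  exact weightedSum_add hbdd (hw n).summable (isTailWeight_geomMix hw _).summable _ _ s

lemma weightedSum_geomMix_zero_eq (hbdd : ∀ n s, |x n s| ≤ C) (hw : ∀ n, IsTailWeight n (w n))
    (hV0 : V 0 = 0) (hV : ∀ n s, V (n + 1) s = V n s + (1 / 2) ^ (n + 1) * weightedSum x (w n) s)
    (n : ℕ) (s : S) :
    weightedSum x (geomMix w 0) s = V n s + (1 / 2) ^ n * weightedSum x (geomMix w n) s := by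
  induction n with
  | zero => simp [hV0]
  | succ n ih =>
    rw [ih, hV, weightedSum_geomMix_eq_midpoint hbdd hw n s]
    ring

lemma weightedSum_geomMix_le_succ_add (hbdd : ∀ n s, |x n s| ≤ C) (hw : ∀ n, IsTailWeight n (w n))
    (hV0 : V 0 = 0) (hV : ∀ n s, V (n + 1) s = V n s + (1 / 2) ^ (n + 1) * weightedSum x (w n) s)
    {ε : ℝ} (hgreedy : ∀ n, ⨆ s, V n s + (1 / 2) ^ n * weightedSum x (w n) s ≤
      (⨆ s, V n s + (1 / 2) ^ n * weightedSum x (geomMix w n) s) + ε * (1 / 4) ^ n)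
    {b : S} (hb : ∀ s, weightedSum x (geomMix w 0) s ≤ weightedSum x (geomMix w 0) b) (n : ℕ) :
    weightedSum x (geomMix w n) b ≤ weightedSum x (geomMix w (n + 1)) b + ε * (1 / 2) ^ n := by
  have hdecomp := weightedSum_geomMix_zero_eq hbdd hw hV0 hV n
  set c : ℝ := (1 / 2) ^ n
  have hc : 0 < c := by positivity
  have hsup : ⨆ s, V n s + c * weightedSum x (geomMix w n) s = weightedSum x (geomMix w 0) b := by
    simp_rw [← hdecomp]
    exact ciSup_eq_of_forall_le_apply hb
  have hbddAbove : BddAbove (Set.range fun s => V n s + c * weightedSum x (w n) s) := by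
    refine ⟨weightedSum x (geomMix w 0) b + c * (2 * C), ?_⟩
    rintro _ ⟨s, rfl⟩
    have hdiff : weightedSum x (w n) s - weightedSum x (geomMix w n) s ≤ 2 * C := by
      linarith [le_of_abs_le (abs_weightedSum_le hbdd (hw n) s),
        neg_le_of_abs_le (abs_weightedSum_le hbdd (isTailWeight_geomMix hw n) s)]
    nlinarith [hdecomp s, hb s, mul_le_mul_of_nonneg_left hdiff hc.le]
  have hgreedy_b : V n b + c * weightedSum x (w n) b ≤
      V n b + c * weightedSum x (geomMix w n) b + ε * (1 / 4) ^ n := calc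
    _ ≤ ⨆ s, V n s + c * weightedSum x (w n) s := le_ciSup hbddAbove b
    _ ≤ _ := hgreedy n
    _ = _ := by rw [hsup, hdecomp b]
  have hquarter : ε * (1 / 4) ^ n = c * (ε * c) := by
    rw [show (1 / 4 : ℝ) = 1 / 2 * (1 / 2) by norm_num, mul_pow]
    ring
  have hw_le : weightedSum x (w n) b ≤ weightedSum x (geomMix w n) b + ε * c := by
    refine le_of_mul_le_mul_left ?_ hc
    rw [mul_add, ← hquarter]
    linarith
  linarith [weightedSum_geomMix_eq_midpoint hbdd hw n b]

lemma exists_isTailWeight_sub_le_limsup [Nonempty S] (hbdd : ∀ n s, |x n s| ≤ C) {ε : ℝ}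
    (hε : 0 < ε) : ∃ l, IsTailWeight 0 l ∧ ∀ b, (∀ s, weightedSum x l s ≤ weightedSum x l b) →
      weightedSum x l b - 2 * ε ≤ limsup (fun k => x k b) atTop := by
  choose pick hpick using fun n (V : S → ℝ) => exists_isTailWeight_iSup_le_add hbdd V
    (pow_nonneg (by norm_num : (0 : ℝ) ≤ 1 / 2) n) n (by positivity : 0 < ε * (1 / 4) ^ n)
  let V : ℕ → S → ℝ := fun n =>
    Nat.rec 0 (fun m Vm s => Vm s + (1 / 2) ^ (m + 1) * weightedSum x (pick m Vm) s) n
  let w : ℕ → ℕ → ℝ := fun n => pick n (V n)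
  have hw : ∀ n, IsTailWeight n (w n) := fun n => (hpick n (V n)).1
  have hgreedy := fun n => (hpick n (V n)).2 _ (isTailWeight_geomMix hw n)
  refine ⟨geomMix w 0, isTailWeight_geomMix hw 0, fun b hb => ?_⟩
  have hstep := weightedSum_geomMix_le_succ_add hbdd hw (V := V) rfl (fun _ _ => rfl) hgreedy hb
  exact le_limsup_of_forall_exists_isTailWeight hbdd fun n =>
    ⟨geomMix w n, isTailWeight_geomMix hw n, sub_two_mul_le_of_le_succ_add hε.le hstep n⟩

end GreedyMix

/-- Simons' inequality. -/
theorem simons_inequality {S : Type*} (x : ℕ → S → ℝ) (C : ℝ)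
    (hbdd : ∀ n s, |x n s| ≤ C)
    (hattain : ∀ l : ℕ → ℝ, (∀ n, 0 ≤ l n ∧ l n ≤ 1) → HasSum l 1 →
      ∃ s0 : S, ∀ s : S, ∑' n, l n * x n s ≤ ∑' n, l n * x n s0) :
    sInf {c : ℝ | ∃ l : ℕ → ℝ, (∀ n, 0 ≤ l n ∧ l n ≤ 1) ∧ HasSum l 1 ∧
        c = ⨆ s : S, ∑' n, l n * x n s} ≤
      ⨆ s : S, limsup (fun n => x n s) atTop := by
  obtain ⟨s₀, -⟩ := hattain _ ((IsTailWeight.zero_iff.1 (.dirac 0)).1)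
    (IsTailWeight.dirac 0).hasSum
  have : Nonempty S := ⟨s₀⟩
  have hlimsup_bdd : BddAbove (Set.range fun s => limsup (fun n => x n s) atTop) :=
    ⟨C, by
      rintro _ ⟨s, rfl⟩
      exact limsup_le_of_le (isCoboundedUnder_le_of_le atTop fun n => neg_le_of_abs_le (hbdd n s))
        (.of_forall fun n => le_of_abs_le (hbdd n s))⟩
  refine le_of_forall_pos_le_add fun ε hε => ?_
  obtain ⟨l, hl, hlim⟩ := exists_isTailWeight_sub_le_limsup hbdd (half_pos hε)
  obtain ⟨b, hb⟩ := hattain l (IsTailWeight.zero_iff.1 hl).1 hl.hasSum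
  have hsup : ⨆ s, weightedSum x l s = weightedSum x l b := ciSup_eq_of_forall_le_apply hb
  refine le_trans (csInf_le ⟨-C, ?_⟩ ⟨l, (IsTailWeight.zero_iff.1 hl).1, hl.hasSum, rfl⟩) ?_
  · rintro _ ⟨l', hl', hsum, rfl⟩
    exact neg_le_iSup_weightedSum hbdd (IsTailWeight.zero_iff.2 ⟨hl', hsum⟩)
  calc ⨆ s, weightedSum x l s ≤ limsup (fun n => x n b) atTop + ε := by linarith [hlim b hb]
    _ ≤ (⨆ s, limsup (fun n => x n s) atTop) + ε := add_le_add_left (le_ciSup hlimsup_bdd b) ε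
end

section
/- Let X be a set and (f_n) a bounded sequence in ℓ^∞(X). Then there exists a normalized block sequence (b_n) of (f_n) such that δ_X(b_n) = ε_X(b_n), where δ_X(h_n) := sup_{x∈X} limsup_n h_n(x) and ε_X(h_n) := inf{ δ_X(k_n) : (k_n) a normalized block sequence of (h_n) }. -/
/-!
Write `D h = δ(|h|)`. Unlike `δ`, which can grow when signs are flipped, `D` does not increase
along block sequences, and `δ ≤ D`. If `v` is a block of `c` with `δ v < ε c + η`, then the
block `(v (2n) - v (2n+1)) / 2` has `D ≤ (δ v + D v) / 2 ≤ (ε c + D c + η) / 2`. Iterating on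
tails gives `d 0 = f` and `d (k+1)` a block of `c k = (d k (n+1))ₙ` with
`D (d (k+1)) ≤ (ε (c k) + D (d k)) / 2 + 2⁻ᵏ`. The diagonal `g k = d k 0` has `(g (n+k))ₙ` a
block of `d k` and `(g (n+k+1))ₙ` a block of `c k`; since `δ` and `ε` only see tails, this gives
`δ g ≤ D (d k)` and `ε (c k) ≤ ε g`. So `a k = D (d k) - ε g` satisfies
`a (k+1) ≤ a k / 2 + 2⁻ᵏ`, hence `δ g - ε g ≤ inf a ≤ 0`, while `ε g ≤ δ g` always.
-/

open Filter

/-- `b` is a normalized block sequence of `f`. -/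
def IsNormalizedBlockSeq {X : Type*} (f b : ℕ → X → ℝ) : Prop :=
  ∃ (F : ℕ → Finset ℕ) (lam : ℕ → ℝ),
    (Pairwise fun m n => Disjoint (F m) (F n)) ∧
    (∀ n, ∑ i ∈ F n, |lam i| = 1) ∧
    (∀ n, b n = fun x => ∑ i ∈ F n, lam i * f i x)

/-- `δ_X`. -/
noncomputable def deltaX {X : Type*} (h : ℕ → X → ℝ) : ℝ :=
  ⨆ x, limsup (fun n => h n x) atTop

/-- `ε_X`. -/
noncomputable def epsX {X : Type*} (f : ℕ → X → ℝ) : ℝ :=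
  sInf {c | ∃ b, IsNormalizedBlockSeq f b ∧ c = deltaX b}

open Function

section BlockSequences

variable {X : Type*}

def IsNormalizedComb (f : ℕ → X → ℝ) (s : Finset ℕ) (b : X → ℝ) : Prop :=
  ∃ lam : ℕ → ℝ, ∑ i ∈ s, |lam i| = 1 ∧ ∀ x, b x = ∑ i ∈ s, lam i * f i x

namespace IsNormalizedComb

variable {f v : ℕ → X → ℝ} {s : Finset ℕ} {b : X → ℝ}

theorem singleton (f : ℕ → X → ℝ) (i : ℕ) : IsNormalizedComb f {i} (f i) :=
  ⟨fun _ => 1, by simp, fun x => by simp⟩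

theorem biUnion {t : Finset ℕ} {F : ℕ → Finset ℕ} (hF : (t : Set ℕ).PairwiseDisjoint F)
    (hv : ∀ j, IsNormalizedComb f (F j) (v j)) (hb : IsNormalizedComb v t b) :
    IsNormalizedComb f (t.biUnion F) b := by
  classical
  choose lam hlam hv using hv
  obtain ⟨mu, hmu, hb⟩ := hb
  set nu : ℕ → ℝ := fun i => ∑ j ∈ t, if i ∈ F j then mu j * lam j i else 0
  have hnu : ∀ j ∈ t, ∀ i ∈ F j, nu i = mu j * lam j i := fun j hj i hi => by
    refine (Finset.sum_eq_single_of_mem j hj fun j' hj' hne => if_neg fun hi' => ?_).trans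
      (if_pos hi)
    exact Finset.disjoint_left.mp (hF hj' hj hne) hi' hi
  refine ⟨nu, ?_, fun x => ?_⟩
  · rw [Finset.sum_biUnion hF, ← hmu]
    refine Finset.sum_congr rfl fun j hj => ?_
    rw [Finset.sum_congr rfl fun i hi => by rw [hnu j hj i hi, abs_mul], ← Finset.mul_sum, hlam,
      mul_one]
  · rw [hb, Finset.sum_biUnion hF]
    refine Finset.sum_congr rfl fun j hj => ?_
    rw [hv, Finset.mul_sum]
    exact Finset.sum_congr rfl fun i hi => by rw [hnu j hj i hi, mul_assoc]

theorem abs_le (h : IsNormalizedComb f s b) {x : X} {a : ℝ} (hf : ∀ i ∈ s, |f i x| ≤ a) :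
    |b x| ≤ a := by
  obtain ⟨lam, hlam, hb⟩ := h
  calc |b x| ≤ ∑ i ∈ s, |lam i| * |f i x| := by
        rw [hb]; exact (Finset.abs_sum_le_sum_abs _ _).trans_eq (by simp_rw [abs_mul])
    _ ≤ ∑ i ∈ s, |lam i| * a :=
        Finset.sum_le_sum fun i hi => mul_le_mul_of_nonneg_left (hf i hi) (abs_nonneg _)
    _ = a := by rw [← Finset.sum_mul, hlam, one_mul]

theorem of_comp_add {m : ℕ} (h : IsNormalizedComb (fun i => f (i + m)) s b) :
    IsNormalizedComb f (s.map (addRightEmbedding m)) b := by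
  obtain ⟨lam, hlam, hb⟩ := h
  refine ⟨fun i => lam (i - m), ?_, fun x => ?_⟩ <;>
    simp only [Finset.sum_map, addRightEmbedding_apply, add_tsub_cancel_right, hlam, hb]

theorem comp_add {m : ℕ} (h : IsNormalizedComb f s b) (hs : ∀ i ∈ s, m ≤ i) :
    IsNormalizedComb (fun i => f (i + m)) (s.image (· - m)) b := by
  classical
  obtain ⟨lam, hlam, hb⟩ := h
  have hinj : Set.InjOn (· - m) (s : Set ℕ) := fun i hi j hj hij => by
    have := hs i hi; have := hs j hj; simp only at hij; omega
  have hsub : ∀ i ∈ s, i - m + m = i := fun i hi => Nat.sub_add_cancel (hs i hi)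
  refine ⟨fun i => lam (i + m), ?_, fun x => ?_⟩
  · rw [Finset.sum_image hinj, ← hlam]
    exact Finset.sum_congr rfl fun i hi => by simp only [hsub i hi]
  · rw [Finset.sum_image hinj, hb]
    exact Finset.sum_congr rfl fun i hi => by simp only [hsub i hi]

end IsNormalizedComb

theorem Pairwise.eventually_disjoint {F : ℕ → Finset ℕ} (hF : Pairwise (Disjoint on F))
    (s : Finset ℕ) : ∀ᶠ n in atTop, Disjoint (F n) s := by
  have hsub : ∀ i, {n | i ∈ F n}.Subsingleton := fun i m hm n hn => by
    by_contra hne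
    exact Finset.disjoint_left.mp (hF hne) hm hn
  have hfin : {n | ¬Disjoint (F n) s}.Finite := by
    refine (s.finite_toSet.biUnion fun i _ => (hsub i).finite).subset fun n hn => ?_
    obtain ⟨i, hin, his⟩ := Finset.not_disjoint_iff.mp hn
    exact Set.mem_biUnion his hin
  rw [← Nat.cofinite_eq_atTop]
  simpa using hfin.eventually_cofinite_notMem

theorem Pairwise.eventually_forall_mem_le {F : ℕ → Finset ℕ} (hF : Pairwise (Disjoint on F))
    (m : ℕ) : ∀ᶠ n in atTop, ∀ i ∈ F n, m ≤ i :=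
  (hF.eventually_disjoint (Finset.range m)).mono fun _ h _ hi =>
    not_lt.mp fun him => Finset.disjoint_left.mp h hi (Finset.mem_range.mpr him)

theorem isNormalizedBlockSeq_iff {f b : ℕ → X → ℝ} :
    IsNormalizedBlockSeq f b ↔
      ∃ F : ℕ → Finset ℕ, Pairwise (Disjoint on F) ∧
        ∀ n, IsNormalizedComb f (F n) (b n) := by
  classical
  constructor
  · rintro ⟨F, lam, hF, hlam, hb⟩
    exact ⟨F, hF, fun n => ⟨lam, hlam n, fun x => by rw [hb n]⟩⟩
  · rintro ⟨F, hF, hb⟩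
    choose lam hlam hb using hb
    -- the supports are disjoint, so each index has at most one owning block
    let owner : ℕ → ℕ := fun i => if h : ∃ n, i ∈ F n then h.choose else 0
    have howner : ∀ n, ∀ i ∈ F n, owner i = n := fun n i hi => by
      have h : ∃ n, i ∈ F n := ⟨n, hi⟩
      simp only [owner, dif_pos h]
      by_contra hne
      exact Finset.disjoint_left.mp (hF hne) h.choose_spec hi
    refine ⟨F, fun i => lam (owner i) i, hF, fun n => ?_, fun n => funext fun x => ?_⟩
    · rw [← hlam n]
      exact Finset.sum_congr rfl fun i hi => by simp only [howner n i hi]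
    · rw [hb n x]
      exact Finset.sum_congr rfl fun i hi => by simp only [howner n i hi]

namespace IsNormalizedBlockSeq

variable {f g b : ℕ → X → ℝ}

theorem refl (f : ℕ → X → ℝ) : IsNormalizedBlockSeq f f :=
  isNormalizedBlockSeq_iff.mpr
    ⟨fun n => {n}, fun _ _ h => Finset.disjoint_singleton.mpr h, IsNormalizedComb.singleton f⟩

theorem trans (hg : IsNormalizedBlockSeq f g) (hb : IsNormalizedBlockSeq g b) :
    IsNormalizedBlockSeq f b := by
  obtain ⟨F, hF, hg⟩ := isNormalizedBlockSeq_iff.mp hg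
  obtain ⟨G, hG, hb⟩ := isNormalizedBlockSeq_iff.mp hb
  classical
  refine isNormalizedBlockSeq_iff.mpr ⟨fun n => (G n).biUnion F, fun m n hmn => ?_,
    fun n => (hb n).biUnion (hF.set_pairwise _) hg⟩
  simp only [onFun, Finset.disjoint_biUnion_left, Finset.disjoint_biUnion_right]
  intro j hj j' hj'
  exact hF fun h => Finset.disjoint_left.mp (hG hmn) hj' (h ▸ hj)

theorem abs_le (hb : IsNormalizedBlockSeq f b) {C : ℝ} (hf : ∀ n x, |f n x| ≤ C) (n : ℕ)
    (x : X) : |b n x| ≤ C := by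
  obtain ⟨F, -, hb⟩ := isNormalizedBlockSeq_iff.mp hb
  exact (hb n).abs_le fun i _ => hf i x

theorem exists_comp_add (hb : IsNormalizedBlockSeq f b) (m : ℕ) :
    ∃ N, IsNormalizedBlockSeq (fun i => f (i + m)) fun n => b (n + N) := by
  classical
  obtain ⟨F, hF, hb⟩ := isNormalizedBlockSeq_iff.mp hb
  obtain ⟨N, hN⟩ := eventually_atTop.mp (hF.eventually_forall_mem_le m)
  refine ⟨N, isNormalizedBlockSeq_iff.mpr ⟨fun n => (F (n + N)).image (· - m),
    fun k n hkn => ?_, fun n => (hb (n + N)).comp_add (hN _ (by omega))⟩⟩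
  simp only [onFun, Finset.disjoint_left, Finset.mem_image]
  rintro _ ⟨i, hi, rfl⟩ ⟨i', hi', heq⟩
  have := hN _ (by omega) i hi
  have := hN _ (by omega) i' hi'
  exact Finset.disjoint_left.mp (hF (by omega : k + N ≠ n + N)) hi (by rwa [show i = i' by omega])

end IsNormalizedBlockSeq

section RealSeq

variable {u : ℕ → ℝ} {C : ℝ}

theorem isBoundedUnder_le_of_abs_le (hu : ∀ n, |u n| ≤ C) :
    IsBoundedUnder (· ≤ ·) atTop u :=
  isBoundedUnder_of ⟨C, fun n => (abs_le.mp (hu n)).2⟩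

theorem isCoboundedUnder_le_of_abs_le (hu : ∀ n, |u n| ≤ C) :
    IsCoboundedUnder (· ≤ ·) atTop u :=
  isCoboundedUnder_le_of_le atTop fun n => (abs_le.mp (hu n)).1

theorem limsup_le_of_abs_le (hu : ∀ n, |u n| ≤ C) : limsup u atTop ≤ C :=
  limsup_le_of_le (isCoboundedUnder_le_of_abs_le hu) (.of_forall fun n => (abs_le.mp (hu n)).2)

theorem neg_le_limsup_of_abs_le (hu : ∀ n, |u n| ≤ C) : -C ≤ limsup u atTop :=
  le_limsup_of_frequently_le (.of_forall fun n => (abs_le.mp (hu n)).1)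
    (isBoundedUnder_le_of_abs_le hu)

theorem limsup_abs_half_sub_le (hu : ∀ n, |u n| ≤ C) :
    limsup (fun n => |(u (2 * n) - u (2 * n + 1)) / 2|) atTop ≤
      (limsup u atTop + limsup (fun n => |u n|) atTop) / 2 := by
  have hu' : ∀ n, |(u (2 * n) - u (2 * n + 1)) / 2| ≤ C := fun n => by
    have := abs_le.mp (hu (2 * n)); have := abs_le.mp (hu (2 * n + 1))
    rw [abs_le]; constructor <;> linarith
  have habs : ∀ n, |(|u n|)| ≤ C := fun n => by rw [abs_abs]; exact hu n
  rw [limsup_le_iff' (isCoboundedUnder_le_of_abs_le fun n => by rw [abs_abs]; exact hu' n)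
    (isBoundedUnder_le_of_abs_le fun n => by rw [abs_abs]; exact hu' n)]
  intro y hy
  set ε := y - (limsup u atTop + limsup (fun n => |u n|) atTop) / 2 with hε_def
  have hε : 0 < ε := by linarith
  have hlt := (eventually_lt_of_limsup_lt (lt_add_of_pos_right (limsup u atTop) hε)
    (isBoundedUnder_le_of_abs_le hu)).and (eventually_lt_of_limsup_lt
      (lt_add_of_pos_right (limsup (fun n => |u n|) atTop) hε) (isBoundedUnder_le_of_abs_le habs))
  obtain ⟨J, hJ⟩ := eventually_atTop.mp hlt
  filter_upwards [eventually_ge_atTop J] with n hn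
  obtain ⟨h0, h0'⟩ := hJ (2 * n) (by omega)
  obtain ⟨h1, h1'⟩ := hJ (2 * n + 1) (by omega)
  rw [abs_lt] at h0' h1'
  rw [abs_le]; constructor <;> linarith [h0'.1, h1'.1]

theorem nonpos_of_forall_le_of_le_half_add_pow {a : ℕ → ℝ}
    (ha : ∀ k, a (k + 1) ≤ a k / 2 + (1 / 2) ^ k) {x : ℝ} (hx : ∀ k, x ≤ a k) :
    x ≤ 0 := by
  have hbound : ∀ k, a k ≤ a 0 * (1 / 2) ^ k + 2 * (k * (1 / 2) ^ k) := by
    intro k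
    induction k with
    | zero => simp
    | succ k ih =>
      calc a (k + 1) ≤ a k / 2 + (1 / 2) ^ k := ha k
        _ ≤ (a 0 * (1 / 2) ^ k + 2 * (k * (1 / 2) ^ k)) / 2 + (1 / 2) ^ k := by linarith
        _ = a 0 * (1 / 2) ^ (k + 1) + 2 * ((k + 1 : ℕ) * (1 / 2) ^ (k + 1)) := by
          push_cast; ring
  have hlim : Tendsto (fun k : ℕ => a 0 * (1 / 2 : ℝ) ^ k + 2 * (k * (1 / 2) ^ k)) atTop
      (nhds 0) := by
    have hpow := tendsto_pow_atTop_nhds_zero_of_lt_one (r := (1 / 2 : ℝ)) (by norm_num)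
      (by norm_num)
    have hmul := tendsto_self_mul_const_pow_of_lt_one (r := (1 / 2 : ℝ)) (by norm_num)
      (by norm_num)
    simpa using (hpow.const_mul (a 0)).add (hmul.const_mul 2)
  exact ge_of_tendsto' hlim fun k => (hx k).trans (hbound k)

end RealSeq

noncomputable def deltaXAbs (h : ℕ → X → ℝ) : ℝ :=
  deltaX fun n x => |h n x|

noncomputable def halfDiff (v : ℕ → X → ℝ) : ℕ → X → ℝ :=
  fun n x => (v (2 * n) x - v (2 * n + 1) x) / 2

theorem isNormalizedBlockSeq_halfDiff (v : ℕ → X → ℝ) :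
    IsNormalizedBlockSeq v (halfDiff v) := by
  refine ⟨fun n => {2 * n, 2 * n + 1}, fun i => (-1) ^ i / 2,
    fun m n hmn => ?_, fun n => ?_, fun n => funext fun x => ?_⟩
  · simp only [Finset.disjoint_insert_left, Finset.disjoint_insert_right,
      Finset.mem_insert, Finset.mem_singleton, Finset.disjoint_singleton]
    omega
  · rw [Finset.sum_pair (by omega)]
    simp only [abs_div, abs_neg_one_pow]
    norm_num
  · rw [Finset.sum_pair (by omega), halfDiff]
    simp only [pow_succ, pow_mul]
    norm_num
    ring

theorem deltaX_comp_add (h : ℕ → X → ℝ) (k : ℕ) :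
    deltaX (fun n => h (n + k)) = deltaX h := by
  unfold deltaX
  congr 1 with x
  exact limsup_nat_add (fun n => h n x) k

theorem deltaXAbs_comp_add (h : ℕ → X → ℝ) (k : ℕ) :
    deltaXAbs (fun n => h (n + k)) = deltaXAbs h :=
  deltaX_comp_add (fun n x => |h n x|) k

section Bounded

variable {f h : ℕ → X → ℝ} {C : ℝ}

theorem bddAbove_range_limsup (hh : ∀ n x, |h n x| ≤ C) :
    BddAbove (Set.range fun x => limsup (fun n => h n x) atTop) :=
  ⟨C, Set.forall_mem_range.mpr fun x => limsup_le_of_abs_le fun n => hh n x⟩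

theorem limsup_le_deltaX (hh : ∀ n x, |h n x| ≤ C) (x : X) :
    limsup (fun n => h n x) atTop ≤ deltaX h :=
  le_ciSup (bddAbove_range_limsup hh) x

theorem deltaX_le_deltaXAbs (hh : ∀ n x, |h n x| ≤ C) : deltaX h ≤ deltaXAbs h :=
  ciSup_mono (bddAbove_range_limsup (fun n x => (abs_abs _).trans_le (hh n x))) fun x =>
    limsup_le_limsup (.of_forall fun _ => le_abs_self _)
      (isCoboundedUnder_le_of_abs_le fun n => hh n x)
      (isBoundedUnder_le_of_abs_le fun n => (abs_abs _).trans_le (hh n x))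

theorem deltaXAbs_le_of_isNormalizedBlockSeq (hf : ∀ n x, |f n x| ≤ C)
    (hh : IsNormalizedBlockSeq f h) : deltaXAbs h ≤ deltaXAbs f := by
  obtain ⟨F, hF, hcomb⟩ := isNormalizedBlockSeq_iff.mp hh
  have hf' : ∀ n x, |(|f n x|)| ≤ C := fun n x => (abs_abs _).trans_le (hf n x)
  have hh' : ∀ n x, |(|h n x|)| ≤ C := fun n x => (abs_abs _).trans_le (hh.abs_le hf n x)
  refine ciSup_mono (bddAbove_range_limsup hf') fun x => ?_
  rw [limsup_le_iff' (isCoboundedUnder_le_of_abs_le (hh' · x))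
    (isBoundedUnder_le_of_abs_le (hh' · x))]
  intro y hy
  obtain ⟨J, hJ⟩ := eventually_atTop.mp
    (eventually_lt_of_limsup_lt hy (isBoundedUnder_le_of_abs_le (hf' · x)))
  filter_upwards [hF.eventually_forall_mem_le J] with n hn
  exact (hcomb n).abs_le fun i hi => (hJ i (hn i hi)).le

theorem deltaXAbs_halfDiff_le [Nonempty X] (hh : ∀ n x, |h n x| ≤ C) :
    deltaXAbs (halfDiff h) ≤ (deltaX h + deltaXAbs h) / 2 :=
  ciSup_le fun x => (limsup_abs_half_sub_le fun n => hh n x).trans (by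
    gcongr
    · exact limsup_le_deltaX hh x
    · exact limsup_le_deltaX (fun n x => (abs_abs _).trans_le (hh n x)) x)

end Bounded

theorem deltaX_eq_epsX_of_isEmpty [IsEmpty X] (h : ℕ → X → ℝ) : deltaX h = epsX h := by
  have h0 : ∀ b : ℕ → X → ℝ, deltaX b = 0 := fun b => Real.iSup_of_isEmpty _
  have hset : {c | ∃ b, IsNormalizedBlockSeq h b ∧ c = deltaX b} = {0} :=
    Set.eq_singleton_iff_unique_mem.mpr
      ⟨⟨h, .refl h, (h0 h).symm⟩, fun c ⟨b, _, hc⟩ => hc.trans (h0 b)⟩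
  rw [epsX, hset, csInf_singleton, h0]

section Eps

variable {c g b : ℕ → X → ℝ} {C : ℝ}

theorem bddBelow_deltaX_blocks [Nonempty X] (hc : ∀ n x, |c n x| ≤ C) :
    BddBelow {r | ∃ b, IsNormalizedBlockSeq c b ∧ r = deltaX b} := by
  refine ⟨-C, ?_⟩
  rintro _ ⟨b, hb, rfl⟩
  obtain ⟨x⟩ := ‹Nonempty X›
  exact (neg_le_limsup_of_abs_le fun n => hb.abs_le hc n x).trans
    (limsup_le_deltaX (hb.abs_le hc) x)

theorem epsX_le_deltaX [Nonempty X] (hc : ∀ n x, |c n x| ≤ C) (hb : IsNormalizedBlockSeq c b) :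
    epsX c ≤ deltaX b :=
  csInf_le (bddBelow_deltaX_blocks hc) ⟨b, hb, rfl⟩

theorem exists_isNormalizedBlockSeq_deltaX_lt {a : ℝ} (ha : epsX c < a) :
    ∃ b, IsNormalizedBlockSeq c b ∧ deltaX b < a := by
  obtain ⟨_, ⟨b, hb, rfl⟩, hlt⟩ := exists_lt_of_csInf_lt
    (s := {r | ∃ b, IsNormalizedBlockSeq c b ∧ r = deltaX b}) ⟨_, c, .refl c, rfl⟩ ha
  exact ⟨b, hb, hlt⟩

theorem epsX_le_epsX_of_comp_add [Nonempty X] {m : ℕ} (hc : ∀ n x, |c n x| ≤ C)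
    (hg : IsNormalizedBlockSeq c fun n => g (n + m)) : epsX c ≤ epsX g := by
  refine le_csInf ⟨_, g, .refl g, rfl⟩ ?_
  rintro _ ⟨e, he, rfl⟩
  obtain ⟨N, hN⟩ := he.exists_comp_add m
  rw [← deltaX_comp_add e N]
  exact epsX_le_deltaX hc (hg.trans hN)

theorem deltaX_le_deltaXAbs_of_comp_add {m : ℕ} (hc : ∀ n x, |c n x| ≤ C)
    (hg : IsNormalizedBlockSeq c fun n => g (n + m)) : deltaX g ≤ deltaXAbs c := by
  rw [← deltaX_comp_add g m]
  exact (deltaX_le_deltaXAbs (hg.abs_le hc)).trans (deltaXAbs_le_of_isNormalizedBlockSeq hc hg)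

theorem exists_isNormalizedBlockSeq_deltaXAbs_le [Nonempty X] (hc : ∀ n x, |c n x| ≤ C)
    {η : ℝ} (hη : 0 < η) : ∃ w, IsNormalizedBlockSeq c w ∧
      deltaXAbs w ≤ (epsX c + deltaXAbs c) / 2 + η := by
  obtain ⟨v, hv, hδv⟩ :=
    exists_isNormalizedBlockSeq_deltaX_lt (lt_add_of_pos_right (epsX c) hη)
  refine ⟨halfDiff v, hv.trans (isNormalizedBlockSeq_halfDiff v), ?_⟩
  have hD := deltaXAbs_le_of_isNormalizedBlockSeq hc hv
  linarith [deltaXAbs_halfDiff_le (hv.abs_le hc)]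

end Eps

/-- `d (k + 1)` avoids `d k 0`, which is kept for the diagonal. -/
theorem exists_chain_deltaXAbs_le [Nonempty X] {f : ℕ → X → ℝ} {C : ℝ}
    (hf : ∀ n x, |f n x| ≤ C) :
    ∃ d : ℕ → ℕ → X → ℝ, d 0 = f ∧ (∀ k n x, |d k n x| ≤ C) ∧
      ∀ k, IsNormalizedBlockSeq (fun n => d k (n + 1)) (d (k + 1)) ∧
        deltaXAbs (d (k + 1)) ≤
          (epsX (fun n => d k (n + 1)) + deltaXAbs (d k)) / 2 + (1 / 2) ^ k := by
  let B := {c : ℕ → X → ℝ // ∀ n x, |c n x| ≤ C}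
  have hstep : ∀ (k : ℕ) (c : B), ∃ w : B,
      IsNormalizedBlockSeq (fun n => c.1 (n + 1)) w.1 ∧
        deltaXAbs w.1 ≤ (epsX (fun n => c.1 (n + 1)) + deltaXAbs c.1) / 2 + (1 / 2) ^ k := by
    intro k c
    obtain ⟨w, hw, hD⟩ := exists_isNormalizedBlockSeq_deltaXAbs_le (fun n => c.2 (n + 1))
      (pow_pos (one_half_pos (α := ℝ)) k)
    exact ⟨⟨w, hw.abs_le fun n => c.2 (n + 1)⟩, hw, by rwa [deltaXAbs_comp_add] at hD⟩
  choose next hnext using hstep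
  let d : ℕ → B := fun k => Nat.rec ⟨f, hf⟩ next k
  exact ⟨fun k => (d k).1, rfl, fun k => (d k).2, fun k => hnext k (d k)⟩

/-- If `F k n` indexes the terms of `d k` that make up `d (k + 1) n`, then `diagSupport F k j`
indexes the terms of `d k` that make up `d (k + j) 0`. -/
def diagSupport (F : ℕ → ℕ → Finset ℕ) : ℕ → ℕ → Finset ℕ
  | _, 0 => {0}
  | k, j + 1 => (diagSupport F (k + 1) j).biUnion (F k)

theorem isNormalizedBlockSeq_diagonal {d : ℕ → ℕ → X → ℝ}
    (hd : ∀ k, IsNormalizedBlockSeq (fun n => d k (n + 1)) (d (k + 1))) (k : ℕ) :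
    IsNormalizedBlockSeq (d k) fun j => d (j + k) 0 := by
  classical
  choose F hF hcomb using fun k => isNormalizedBlockSeq_iff.mp (hd k)
  set F' : ℕ → ℕ → Finset ℕ := fun k n => (F k n).map (addRightEmbedding 1)
  have hF' : ∀ k, Pairwise (Disjoint on F' k) := fun k m n hmn =>
    (Finset.disjoint_map _).mpr (hF k hmn)
  have hzero : ∀ k n, 0 ∉ F' k n := fun k n => by simp [F']
  have hsupp : ∀ j k, IsNormalizedComb (d k) (diagSupport F' k j) (d (j + k) 0) := by
    intro j
    induction j with
    | zero => intro k; simpa [diagSupport] using IsNormalizedComb.singleton (d k) 0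
    | succ j ih =>
      intro k
      rw [show j + 1 + k = j + (k + 1) by omega]
      exact (ih (k + 1)).biUnion ((hF' k).set_pairwise _) fun n => (hcomb k n).of_comp_add
  have hdisj : ∀ j j' k, j < j' → Disjoint (diagSupport F' k j) (diagSupport F' k j') := by
    intro j
    induction j with
    | zero =>
      rintro (_ | j') k hj
      · omega
      · simpa [diagSupport] using fun i _ => hzero k i
    | succ j ih =>
      rintro (_ | j') k hj
      · omega
      simp only [diagSupport, Finset.disjoint_biUnion_left, Finset.disjoint_biUnion_right]
      intro i hi i' hi'
      exact hF' k fun h => Finset.disjoint_left.mp (ih j' (k + 1) (by omega)) hi' (h ▸ hi)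
  refine isNormalizedBlockSeq_iff.mpr ⟨diagSupport F' k, fun j j' hne => ?_, fun j => hsupp j k⟩
  rcases hne.lt_or_gt with h | h
  exacts [hdisj j j' k h, (hdisj j' j k h).symm]

end BlockSequences

/-- Hagler–Johnson diagonalization lemma. -/
theorem hagler_johnson_diagonalization {X : Type*} (f : ℕ → X → ℝ) (C : ℝ)
    (hbdd : ∀ n x, |f n x| ≤ C) :
    ∃ b : ℕ → X → ℝ, IsNormalizedBlockSeq f b ∧ deltaX b = epsX b := by
  rcases isEmpty_or_nonempty X with hX | hX
  · exact ⟨f, .refl f, deltaX_eq_epsX_of_isEmpty f⟩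
  obtain ⟨d, rfl, hdC, hstep⟩ := exists_chain_deltaXAbs_le hbdd
  have hdiag := isNormalizedBlockSeq_diagonal fun k => (hstep k).1
  set g : ℕ → X → ℝ := fun j => d j 0
  have hg : IsNormalizedBlockSeq (d 0) g := by simpa using hdiag 0
  refine ⟨g, hg, le_antisymm ?_ (epsX_le_deltaX (hg.abs_le (hdC 0)) (.refl g))⟩
  have hε : ∀ k, epsX (fun n => d k (n + 1)) ≤ epsX g := fun k =>
    epsX_le_epsX_of_comp_add (g := g) (fun n => hdC k (n + 1)) ((hstep k).1.trans (hdiag (k + 1)))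
  refine sub_nonpos.mp (nonpos_of_forall_le_of_le_half_add_pow
    (a := fun k => deltaXAbs (d k) - epsX g) (fun k => ?_) fun k => ?_)
  · linarith [(hstep k).2, hε k]
  · linarith [deltaX_le_deltaXAbs_of_comp_add (g := g) (hdC k) (hdiag k)]
end

section
/- Let E be a normed space and (a_n) a sequence in the closed unit ball of E with ∑_{i≤n} δ_i|λ_i| ≤ ‖∑_{i≤n} λ_i a_i‖ for all finite real sequences, where δ_i ∈ (0,1]. Let V = span{a_n : n ∈ ℕ} and for each n define the linear map g_n : V → ℝ by g_n(a_i) = -δ_i for i < n and g_n(a_i) = δ_i for i ≥ n. Then each g_n is continuous with operator norm exactly 1, provided δ_i → 1 as i → ∞. -/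
open Filter

lemma key_est' {E : Type*} [NormedAddCommGroup E] [NormedSpace ℝ E]
    (a : ℕ → E) (δ : ℕ → ℝ)
    (hest : ∀ (n : ℕ) (lam : ℕ → ℝ),
      ∑ i ∈ Finset.range (n+1), δ i * |lam i| ≤ ‖∑ i ∈ Finset.range (n+1), lam i • a i‖)
    (c : ℕ →₀ ℝ) (N : ℕ) (hN : c.support ⊆ Finset.range (N+1)) :
    ∑ i ∈ Finset.range (N+1), δ i * |c i| ≤ ‖Finsupp.linearCombination ℝ a c‖ := by
  have h := hest N c
  rwa [show ∑ i ∈ Finset.range (N+1), c i • a i = Finsupp.linearCombination ℝ a c from ?_] at h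
  rw [Finsupp.linearCombination_apply, Finsupp.sum]
  exact (Finset.sum_subset hN (fun i _ hi => by
    simp [Finsupp.notMem_support_iff.1 hi])).symm

lemma indep' {E : Type*} [NormedAddCommGroup E] [NormedSpace ℝ E]
    (a : ℕ → E) (δ : ℕ → ℝ) (hδ : ∀ n, δ n ∈ Set.Ioc (0:ℝ) 1)
    (hest : ∀ (n : ℕ) (lam : ℕ → ℝ),
      ∑ i ∈ Finset.range (n+1), δ i * |lam i| ≤ ‖∑ i ∈ Finset.range (n+1), lam i • a i‖) :
    LinearIndependent ℝ a := by
  rw [linearIndependent_iff]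
  intro c hc
  set N := c.support.sup id with hNdef
  have hsub : c.support ⊆ Finset.range (N+1) := fun i hi =>
    Finset.mem_range.2 (Nat.lt_succ_of_le (Finset.le_sup (f := id) hi))
  have h := key_est' a δ hest c N hsub
  rw [hc, norm_zero] at h
  have hnonneg : ∀ i ∈ Finset.range (N+1), 0 ≤ δ i * |c i| :=
    fun i _ => mul_nonneg (hδ i).1.le (abs_nonneg _)
  have hzero : ∀ i ∈ Finset.range (N+1), δ i * |c i| = 0 :=
    fun i hi => le_antisymm (by
      calc δ i * |c i| ≤ ∑ j ∈ Finset.range (N+1), δ j * |c j| :=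
        Finset.single_le_sum hnonneg hi
      _ ≤ 0 := h) (hnonneg i hi)
  ext i
  by_cases hi : i ∈ c.support
  · have := hzero i (hsub hi)
    rcases mul_eq_zero.1 this with h1 | h1
    · exact absurd h1 (ne_of_gt (hδ i).1)
    · simpa using abs_eq_zero.1 h1
  · simpa using Finsupp.notMem_support_iff.1 hi

/-- The norming functionals `g_n` exist on `V = span{a_i}` and have norm exactly 1. -/
theorem norming_functionals {E : Type*} [NormedAddCommGroup E] [NormedSpace ℝ E]
    (a : ℕ → E) (δ : ℕ → ℝ) (ha : ∀ n, ‖a n‖ ≤ 1)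
    (hδ : ∀ n, δ n ∈ Set.Ioc (0:ℝ) 1)
    (hδlim : Tendsto δ atTop (nhds 1))
    (hest : ∀ (n : ℕ) (lam : ℕ → ℝ),
      ∑ i ∈ Finset.range (n+1), δ i * |lam i| ≤ ‖∑ i ∈ Finset.range (n+1), lam i • a i‖)
    (n : ℕ) :
    ∃ g : (Submodule.span ℝ (Set.range a)) →L[ℝ] ℝ,
      (∀ i, g ⟨a i, Submodule.subset_span ⟨i, rfl⟩⟩ = if i < n then -δ i else δ i) ∧
      ‖g‖ = 1 := by
  have li : LinearIndependent ℝ a := indep' a δ hδ hest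
  set ε : ℕ → ℝ := fun i => if i < n then -δ i else δ i with hε
  set g₀ : (Submodule.span ℝ (Set.range a)) →ₗ[ℝ] ℝ :=
    (Finsupp.linearCombination ℝ ε).comp li.repr with hg₀
  have hbound : ∀ x : Submodule.span ℝ (Set.range a), ‖g₀ x‖ ≤ 1 * ‖x‖ := by
    intro x
    set c := li.repr x with hc
    set N := c.support.sup id with hNdef
    have hsub : c.support ⊆ Finset.range (N+1) := fun i hi =>
      Finset.mem_range.2 (Nat.lt_succ_of_le (Finset.le_sup (f := id) hi))
    have hx : ‖x‖ = ‖Finsupp.linearCombination ℝ a c‖ := by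
      rw [li.linearCombination_repr]; rfl
    have hgx : g₀ x = ∑ i ∈ Finset.range (N+1), c i * ε i := by
      simp only [hg₀, LinearMap.comp_apply, Finsupp.linearCombination_apply, Finsupp.sum]
      exact Finset.sum_subset hsub (fun i _ hi => by
        simp [Finsupp.notMem_support_iff.1 hi])
    rw [one_mul, hx, hgx]
    calc ‖∑ i ∈ Finset.range (N+1), c i * ε i‖
        ≤ ∑ i ∈ Finset.range (N+1), ‖c i * ε i‖ := norm_sum_le _ _
      _ = ∑ i ∈ Finset.range (N+1), δ i * |c i| := by
          refine Finset.sum_congr rfl (fun i _ => ?_)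
          simp only [hε, Real.norm_eq_abs, abs_mul]
          rw [mul_comm]
          congr 1
          by_cases h : i < n <;> simp [h, abs_of_pos (hδ i).1]
      _ ≤ ‖Finsupp.linearCombination ℝ a c‖ := key_est' a δ hest c N hsub
  set g : (Submodule.span ℝ (Set.range a)) →L[ℝ] ℝ := g₀.mkContinuous 1 hbound with hg
  have hval : ∀ i, g ⟨a i, Submodule.subset_span ⟨i, rfl⟩⟩ = if i < n then -δ i else δ i := by
    intro i
    have hrepr : li.repr ⟨a i, Submodule.subset_span ⟨i, rfl⟩⟩ = Finsupp.single i 1 :=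
      li.repr_eq_single i _ rfl
    show g₀ _ = _
    simp [hg₀, hrepr, hε]
  refine ⟨g, hval, le_antisymm (g₀.mkContinuous_norm_le zero_le_one hbound) ?_⟩
  have hle : ∀ᶠ i in atTop, δ i ≤ ‖g‖ := by
    filter_upwards [eventually_ge_atTop n] with i hi
    have : g ⟨a i, Submodule.subset_span ⟨i, rfl⟩⟩ = δ i := by
      rw [hval i, if_neg (not_lt.2 hi)]
    calc δ i = ‖g ⟨a i, Submodule.subset_span ⟨i, rfl⟩⟩‖ := by
            rw [this, Real.norm_eq_abs, abs_of_pos (hδ i).1]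
      _ ≤ ‖g‖ * ‖(⟨a i, Submodule.subset_span ⟨i, rfl⟩⟩ : Submodule.span ℝ (Set.range a))‖ :=
            g.le_opNorm _
      _ ≤ ‖g‖ * 1 := by
            exact mul_le_mul_of_nonneg_left (ha i) (norm_nonneg g)
      _ = ‖g‖ := mul_one _
  exact le_of_tendsto hδlim hle
end

section
/- Let E be a normed space in which every continuous linear functional attains its supremum on the closed unit ball (E is sup-reflexive). Then E contains no asymptotically isometric copy of ℓ¹(ℕ). (Assume the Hahn–Banach extension theorem.) -/
/-!
Hahn–Banach turns the asymptotically isometric copy `(aₘ)` into functionals `fₙ` of norm `≤ 1`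
with `fₙ aₘ = δₘ` for `n ≤ m` and `fₙ aₘ = -δₘ` for `m < n`. Let `Φ` be a weak-* cluster point of
`(fₙ)` (a pointwise limit along a free ultrafilter) and `g = ∑ 2⁻ⁿ⁻¹ fₙ`. Then
`(g - Φ) aₘ → 1 - (-1) = 2`, so at a point `x` of the unit ball where `g - Φ` attains its supremum
we get `g x = 1` and `Φ x = -1`. As `g` is an average with positive weights, `g x = 1` forces
`fₙ x = 1` for all `n`, hence `Φ x = 1`: a contradiction.
-/

open Filter Topology Submodule Set

section

variable {ι E : Type*} [NormedAddCommGroup E] [NormedSpace ℝ E]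

theorem abs_apply_le_one {f : E →L[ℝ] ℝ} (hf : ‖f‖ ≤ 1) {v : E} (hv : ‖v‖ ≤ 1) : |f v| ≤ 1 :=
  (f.le_of_opNorm_le_of_le hf hv).trans_eq (one_mul 1)

theorem linearIndependent_of_weighted_l1_le_norm {a : ι → E} {δ : ι → ℝ} (hδ : ∀ i, 0 < δ i)
    (hl : ∀ l : ι →₀ ℝ, (l.sum fun i r => δ i * |r|) ≤ ‖Finsupp.linearCombination ℝ a l‖) :
    LinearIndependent ℝ a := by
  rw [linearIndependent_iff]
  intro l hl0
  ext i
  by_contra hi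
  have hterm : δ i * |l i| ≤ l.sum fun j r => δ j * |r| :=
    Finset.single_le_sum (f := fun j => δ j * |l j|)
      (fun j _ => mul_nonneg (hδ j).le (abs_nonneg _)) (Finsupp.mem_support_iff.mpr hi)
  have hpos : 0 < δ i * |l i| := mul_pos (hδ i) (abs_pos.mpr hi)
  have hzero := hl l
  rw [hl0, norm_zero] at hzero
  linarith

theorem exists_dual_apply_eq_of_weighted_l1_le_norm {a : ι → E} {δ : ι → ℝ}
    (hδ : ∀ i, 0 < δ i)
    (hl : ∀ l : ι →₀ ℝ, (l.sum fun i r => δ i * |r|) ≤ ‖Finsupp.linearCombination ℝ a l‖)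
    {c : ι → ℝ} (hc : ∀ i, |c i| ≤ δ i) :
    ∃ f : E →L[ℝ] ℝ, ‖f‖ ≤ 1 ∧ ∀ i, f (a i) = c i := by
  have hind := linearIndependent_of_weighted_l1_le_norm hδ hl
  let ψ : span ℝ (range a) →ₗ[ℝ] ℝ := Finsupp.linearCombination ℝ c ∘ₗ hind.repr
  have hψ : ∀ u, ‖ψ u‖ ≤ 1 * ‖u‖ := by
    intro u
    calc ‖ψ u‖ = |(hind.repr u).sum fun i r => r * c i| := by
          simp [ψ, Finsupp.linearCombination_apply]
      _ ≤ (hind.repr u).sum fun i r => δ i * |r| :=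
          (Finset.abs_sum_le_sum_abs _ _).trans <| Finset.sum_le_sum fun i _ => by
            rw [abs_mul, mul_comm]
            exact mul_le_mul_of_nonneg_right (hc i) (abs_nonneg _)
      _ ≤ ‖Finsupp.linearCombination ℝ a (hind.repr u)‖ := hl _
      _ = 1 * ‖u‖ := by rw [hind.linearCombination_repr, one_mul]; rfl
  obtain ⟨f, hfψ, hfnorm⟩ := exists_extension_norm_eq _ (ψ.mkContinuous 1 hψ)
  refine ⟨f, hfnorm ▸ ψ.mkContinuous_norm_le zero_le_one hψ, fun i => ?_⟩
  have hi : a i ∈ span ℝ (range a) := subset_span ⟨i, rfl⟩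
  calc f (a i) = ψ ⟨a i, hi⟩ := hfψ ⟨a i, hi⟩
    _ = c i := by simp [ψ, hind.repr_eq_single i ⟨a i, hi⟩ rfl]

theorem weighted_l1_le_norm_linearCombination {a : ℕ → E} {δ : ℕ → ℝ}
    (hl : ∀ (n : ℕ) (lam : ℕ → ℝ),
      ∑ i ∈ Finset.range (n + 1), δ i * |lam i| ≤ ‖∑ i ∈ Finset.range (n + 1), lam i • a i‖)
    (l : ℕ →₀ ℝ) : (l.sum fun i r => δ i * |r|) ≤ ‖Finsupp.linearCombination ℝ a l‖ := by
  have hsub : l.support ⊆ Finset.range (l.support.sup id + 1) := fun i hi =>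
    Finset.mem_range_succ_iff.mpr (Finset.le_sup (f := id) hi)
  rw [Finsupp.linearCombination_apply, Finsupp.sum_of_support_subset l hsub _ (by simp),
    Finsupp.sum_of_support_subset l hsub _ (by simp)]
  exact hl _ l

theorem exists_tendsto_ultrafilter_of_norm_le {f : ι → E →L[ℝ] ℝ} {C : ℝ} (hC : 0 ≤ C)
    (hf : ∀ i, ‖f i‖ ≤ C) (U : Ultrafilter ι) :
    ∃ Φ : E →L[ℝ] ℝ, ‖Φ‖ ≤ C ∧ ∀ v, Tendsto (fun i => f i v) U (𝓝 (Φ v)) := by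
  have hbound : ∀ i v, f i v ∈ Metric.closedBall 0 (C * ‖v‖) := fun i v => by
    rw [mem_closedBall_zero_iff]
    exact (f i).le_of_opNorm_le (hf i) v
  have hlim : ∀ v, ∃ L, Tendsto (fun i => f i v) U (𝓝 L) := fun v => by
    obtain ⟨L, -, hL⟩ := (isCompact_closedBall (0 : ℝ) (C * ‖v‖)).ultrafilter_le_nhds
      (U.map fun i => f i v) (tendsto_principal.2 (Eventually.of_forall fun i => hbound i v))
    exact ⟨L, hL⟩
  choose L hL using hlim
  let Φ : E →ₗ[ℝ] ℝ :=
    { toFun := L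
      map_add' := fun v w => tendsto_nhds_unique (hL (v + w)) (by simpa using (hL v).add (hL w))
      map_smul' := fun t v =>
        tendsto_nhds_unique (hL (t • v)) (by simpa using (hL v).const_mul t) }
  have hΦ : ∀ v, ‖Φ v‖ ≤ C * ‖v‖ := fun v => by
    rw [← mem_closedBall_zero_iff]
    exact Metric.isClosed_closedBall.mem_of_tendsto (hL v) (Eventually.of_forall (hbound · v))
  exact ⟨Φ.mkContinuous C hΦ, Φ.mkContinuous_norm_le hC hΦ, hL⟩

theorem exists_hasSum_apply_of_norm_le {f : ι → E →L[ℝ] ℝ} (hf : ∀ i, ‖f i‖ ≤ 1)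
    {w : ι → ℝ} {s : ℝ} (hw0 : ∀ i, 0 ≤ w i) (hw : HasSum w s) :
    ∃ g : E →L[ℝ] ℝ, ‖g‖ ≤ s ∧ ∀ v, HasSum (fun i => w i * f i v) (g v) := by
  have hnorm : ∀ i, ‖w i • f i‖ ≤ w i := fun i => by
    rw [norm_smul, Real.norm_of_nonneg (hw0 i)]
    exact mul_le_of_le_one_right (hw0 i) (hf i)
  have hsum : Summable fun i => w i • f i := hw.summable.of_norm_bounded hnorm
  refine ⟨∑' i, w i • f i, tsum_of_norm_bounded hw hnorm, fun v => ?_⟩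
  simpa using hsum.hasSum.mapL (ContinuousLinearMap.apply ℝ ℝ v)

theorem tsum_mul_lt_of_lt_one {w t : ι → ℝ} (hw : ∀ i, 0 < w i) (hw1 : HasSum w 1)
    (ht : ∀ i, t i ≤ 1) (hwt : Summable fun i => w i * t i) {i : ι} (hi : t i < 1) :
    ∑' j, w j * t j < 1 :=
  hasSum_lt (fun j => mul_le_of_le_one_right (hw j).le (ht j))
    (mul_lt_of_lt_one_right (hw i) hi) hwt.hasSum hw1

def SupReflexive (E : Type*) [NormedAddCommGroup E] [NormedSpace ℝ E] : Prop :=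
  ∀ f : E →L[ℝ] ℝ, ∃ x : E, ‖x‖ ≤ 1 ∧ ∀ y : E, ‖y‖ ≤ 1 → f y ≤ f x

theorem not_supReflexive_of_iterated_limits {a : ℕ → E} (ha : ∀ m, ‖a m‖ ≤ 1) {f : ℕ → E →L[ℝ] ℝ}
    (hf : ∀ n, ‖f n‖ ≤ 1) {c : ℕ → ℝ}
    (hrow : ∀ n, Tendsto (fun m => f n (a m)) atTop (𝓝 1))
    (hcol : ∀ m, Tendsto (fun n => f n (a m)) atTop (𝓝 (c m)))
    (hc : Tendsto c atTop (𝓝 (-1))) :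
    ¬ SupReflexive E := by
  intro hsup
  obtain ⟨Φ, hΦ, hΦlim⟩ := exists_tendsto_ultrafilter_of_norm_le zero_le_one hf (hyperfilter ℕ)
  have hΦa : ∀ m, Φ (a m) = c m := fun m =>
    tendsto_nhds_unique (hΦlim _) ((hcol m).mono_left Nat.hyperfilter_le_atTop)
  set w : ℕ → ℝ := fun n => 1 / 2 / 2 ^ n
  have hw : HasSum w 1 := hasSum_geometric_two' 1
  have hwpos : ∀ n, 0 < w n := fun n => by positivity
  obtain ⟨g, hg, hgsum⟩ := exists_hasSum_apply_of_norm_le hf (fun n => (hwpos n).le) hw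
  have hfa : ∀ n m, ‖w n * f n (a m)‖ ≤ w n := fun n m => by
    rw [norm_mul, Real.norm_of_nonneg (hwpos n).le]
    exact mul_le_of_le_one_right (hwpos n).le (abs_apply_le_one (hf n) (ha m))
  have hga : Tendsto (fun m => g (a m)) atTop (𝓝 1) := by
    have := tendsto_tsum_of_dominated_convergence hw.summable
      (fun n => (hrow n).const_mul (w n)) (Eventually.of_forall fun m n => hfa n m)
    simpa [(hgsum _).tsum_eq, hw.tsum_eq] using this
  obtain ⟨x, hx, hmax⟩ := hsup (g - Φ)
  have h2 : 2 ≤ g x - Φ x := by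
    refine le_of_tendsto' (by simpa [hΦa, one_add_one_eq_two] using hga.sub hc) fun m => ?_
    simpa [hΦa] using hmax (a m) (ha m)
  have hgx : 1 ≤ g x := by linarith [neg_le_of_abs_le (abs_apply_le_one hΦ hx)]
  have hfx_le : ∀ n, f n x ≤ 1 := fun n => le_of_abs_le (abs_apply_le_one (hf n) hx)
  have hfx : ∀ n, f n x = 1 := fun n => (hfx_le n).antisymm <| not_lt.mp fun hlt =>
    hgx.not_gt <| (hgsum x).tsum_eq ▸ tsum_mul_lt_of_lt_one hwpos hw hfx_le (hgsum x).summable hlt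
  have : Φ x = 1 := tendsto_nhds_unique (hΦlim x) (by simp [hfx])
  linarith [le_of_abs_le (abs_apply_le_one hg hx)]

end

/-- A sup-reflexive normed space contains no asymptotically isometric copy of `ℓ¹(ℕ)`. -/
theorem supReflexive_no_asymptotically_isometric_l1 {E : Type*}
    [NormedAddCommGroup E] [NormedSpace ℝ E]
    (hsup : ∀ f : E →L[ℝ] ℝ, ∃ x : E, ‖x‖ ≤ 1 ∧ ∀ y : E, ‖y‖ ≤ 1 → f y ≤ f x) :
    ¬ ∃ (a : ℕ → E) (δ : ℕ → ℝ),
      (∀ n, ‖a n‖ ≤ 1) ∧ (∀ n, δ n ∈ Set.Ioo (0:ℝ) 1) ∧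
      Tendsto δ atTop (nhds 1) ∧
      ∀ (n : ℕ) (lam : ℕ → ℝ),
        ∑ i ∈ Finset.range (n+1), δ i * |lam i| ≤
          ‖∑ i ∈ Finset.range (n+1), lam i • a i‖ := by
  rintro ⟨a, δ, ha, hδ, hδ1, hl⟩
  have hδpos : ∀ n, 0 < δ n := fun n => (hδ n).1
  have hsign : ∀ n, ∃ f : E →L[ℝ] ℝ, ‖f‖ ≤ 1 ∧ ∀ m, f (a m) = if n ≤ m then δ m else -δ m :=
    fun n => exists_dual_apply_eq_of_weighted_l1_le_norm hδpos
      (weighted_l1_le_norm_linearCombination hl) fun m => by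
        split_ifs <;> simp [abs_of_pos (hδpos m)]
  choose f hf hfa using hsign
  refine not_supReflexive_of_iterated_limits ha hf (c := fun m => -δ m) (fun n => ?_)
    (fun m => ?_) (by simpa using hδ1.neg) hsup
  · exact hδ1.congr' <| (eventually_ge_atTop n).mono fun m hnm => by simp [hfa, hnm]
  · exact tendsto_const_nhds.congr' <| (eventually_gt_atTop m).mono fun n hmn => by
      simp [hfa, not_le.mpr hmn]
end

section
/- Let E be a normed space, ϑ > 0, and (a_n) a sequence in the closed unit ball of E with inf_n distance(span{a_i : i < n}, conv{a_i : i ≥ n}) ≥ ϑ. Then, letting V = span{a_n : n ∈ ℕ}, there exists a sequence (f_n) in the closed unit ball of V' such that f_n(a_i) = 0 for all i < n and f_n(a_i) ≥ ϑ for all i ≥ n. -/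
open Filter Pointwise

/-- Construction of a `ϑ`-triangular sequence from a `ϑ`-separated sequence. -/
theorem triangular_from_separated {E : Type*} [NormedAddCommGroup E] [NormedSpace ℝ E]
    (ϑ : ℝ) (hϑ : 0 < ϑ) (a : ℕ → E) (ha : ∀ n, ‖a n‖ ≤ 1)
    (hsep : ∀ n : ℕ, ∀ x ∈ (Submodule.span ℝ (a '' {i | i < n}) : Set E),
      ∀ y ∈ convexHull ℝ (a '' {i | n ≤ i}), ϑ ≤ ‖x - y‖) :
    ∃ f : ℕ → (Submodule.span ℝ (Set.range a) →L[ℝ] ℝ),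
      (∀ n, ‖f n‖ ≤ 1) ∧
      (∀ n i, i < n → f n ⟨a i, Submodule.subset_span ⟨i, rfl⟩⟩ = 0) ∧
      (∀ n i, n ≤ i → ϑ ≤ f n ⟨a i, Submodule.subset_span ⟨i, rfl⟩⟩) := by
  set V : Submodule ℝ E := Submodule.span ℝ (Set.range a) with hV
  set aV : ℕ → V := fun i => ⟨a i, Submodule.subset_span ⟨i, rfl⟩⟩ with haV
  suffices h : ∀ n : ℕ, ∃ g : V →L[ℝ] ℝ, ‖g‖ ≤ 1 ∧ (∀ i, i < n → g (aV i) = 0) ∧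
      (∀ i, n ≤ i → ϑ ≤ g (aV i)) by
    choose f hf1 hf2 hf3 using h
    exact ⟨f, hf1, fun n i hi => hf2 n i hi, fun n i hi => hf3 n i hi⟩
  intro n
  set S : Submodule ℝ V := Submodule.span ℝ (aV '' {i | i < n}) with hS
  set K : Set V := convexHull ℝ (aV '' {i | n ≤ i}) with hK
  -- the key distance estimate, transported to `V`
  have key : ∀ s ∈ S, ∀ k ∈ K, ϑ ≤ ‖s - k‖ := by
    intro s hs k hk
    have hsE : (s : E) ∈ Submodule.span ℝ (a '' {i | i < n}) := by
      have : (s : E) ∈ Submodule.map V.subtype S := ⟨s, hs, rfl⟩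
      rwa [hS, Submodule.map_span, Set.image_image] at this
    have hkE : (k : E) ∈ convexHull ℝ (a '' {i | n ≤ i}) := by
      have : (k : E) ∈ V.subtype '' K := ⟨k, hk, rfl⟩
      rwa [hK, V.subtype.image_convexHull, Set.image_image] at this
    have := hsep n (s : E) hsE (k : E) hkE
    simpa [AddSubgroupClass.coe_norm] using this
  set U : Set V := (S : Set V) + Metric.ball (0 : V) ϑ with hU
  have hU_open : IsOpen U := Metric.isOpen_ball.add_left
  have hU_conv : Convex ℝ U := (S.convex).add (convex_ball 0 ϑ)
  have hSU : ∀ s ∈ S, s ∈ U := by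
    intro s hs
    have : s + 0 ∈ U := Set.add_mem_add hs (by simp [hϑ])
    simpa using this
  have hdisj : Disjoint U K := by
    rw [Set.disjoint_left]
    rintro v hvU hvK
    obtain ⟨s, hs, b, hb, rfl⟩ := hvU
    have h1 : ϑ ≤ ‖s - (s + b)‖ := key s hs _ hvK
    simp only [Metric.mem_ball, dist_zero_right] at hb
    rw [show s - (s + b) = -b by abel, norm_neg] at h1
    linarith
  obtain ⟨f, u, hfU, hfK⟩ := geometric_hahn_banach_open hU_conv hU_open (convex_convexHull ℝ _)
    hdisj
  have hu0 : 0 < u := by simpa using hfU 0 (hSU 0 S.zero_mem)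
  -- f vanishes on S
  have hfS : ∀ s ∈ S, f s = 0 := by
    intro s hs
    by_contra hne
    have h1 : ((u + 1) / f s) • s ∈ S := S.smul_mem _ hs
    have h2 := hfU _ (hSU _ h1)
    rw [map_smul, smul_eq_mul, div_mul_cancel₀ _ hne] at h2
    linarith
  -- bound on small vectors
  have hsmall : ∀ w : V, ‖w‖ < ϑ → |f w| < u := by
    intro w hw
    have h1 : f w < u := hfU w (by
      have : (0 : V) + w ∈ U := Set.add_mem_add S.zero_mem (by simpa [dist_eq_norm] using hw)
      simpa using this)
    have h2 : f (-w) < u := hfU (-w) (by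
      have : (0 : V) + -w ∈ U := Set.add_mem_add S.zero_mem (by simpa [dist_eq_norm] using hw)
      simpa using this)
    rw [map_neg] at h2
    rw [abs_lt]; constructor <;> linarith
  -- the norm bound ϑ * |f v| ≤ u * ‖v‖
  have hbound : ∀ v : V, ϑ * |f v| ≤ u * ‖v‖ := by
    intro v
    rcases eq_or_ne (f v) 0 with h | h
    · simp [h]; positivity
    have hv0 : v ≠ 0 := fun hv => h (by simp [hv])
    have hvpos : 0 < ‖v‖ := norm_pos_iff.mpr hv0
    have hstep : ∀ t : ℝ, 0 < t → t < 1 → t * (ϑ * |f v|) < u * ‖v‖ := by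
      intro t ht0 ht1
      have hw : ‖(t * ϑ / ‖v‖) • v‖ < ϑ := by
        rw [norm_smul, Real.norm_eq_abs, abs_of_pos (by positivity), div_mul_cancel₀ _ hvpos.ne']
        nlinarith
      have := hsmall _ hw
      rw [map_smul, smul_eq_mul, abs_mul, abs_of_pos (by positivity : (0:ℝ) < t * ϑ / ‖v‖)]
        at this
      have := (div_lt_iff₀ hvpos).mp (by rwa [div_mul_eq_mul_div] at this)
      nlinarith
    by_contra hcon
    push_neg at hcon
    have hfv : 0 < ϑ * |f v| := lt_of_le_of_lt (by positivity) hcon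
    set t : ℝ := (u * ‖v‖ / (ϑ * |f v|) + 1) / 2 with ht
    have ht0 : 0 < t := by positivity
    have ht1 : t < 1 := by
      have : u * ‖v‖ / (ϑ * |f v|) < 1 := (div_lt_one hfv).mpr hcon
      rw [ht]; linarith
    have := hstep t ht0 ht1
    rw [ht] at this
    have hq : u * ‖v‖ / (ϑ * |f v|) * (ϑ * |f v|) = u * ‖v‖ := div_mul_cancel₀ _ hfv.ne'
    nlinarith
  refine ⟨(ϑ / u) • f, ?_, ?_, ?_⟩
  · refine ContinuousLinearMap.opNorm_le_bound _ zero_le_one fun v => ?_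
    have := hbound v
    rw [ContinuousLinearMap.smul_apply, smul_eq_mul, norm_mul, Real.norm_eq_abs,
      Real.norm_eq_abs, abs_of_pos (by positivity : (0:ℝ) < ϑ / u), one_mul]
    rw [div_mul_eq_mul_div, div_le_iff₀ hu0]
    nlinarith
  · intro i hi
    have : f (aV i) = 0 := hfS _ (Submodule.subset_span ⟨i, hi, rfl⟩)
    simp [this]
  · intro i hi
    have h1 : u ≤ f (aV i) := hfK _ (subset_convexHull ℝ _ ⟨i, hi, rfl⟩)
    have : ϑ / u * u ≤ ϑ / u * f (aV i) := by
      apply mul_le_mul_of_nonneg_left h1 (by positivity)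
    rw [div_mul_cancel₀ _ hu0.ne'] at this
    simpa using this
end

section
/- Let E be a sup-reflexive normed space (every f ∈ E' attains its supremum on the closed unit ball Γ_E), ϑ > 0, and (a_n, f_n) an extended ϑ-triangular sequence of E with extensions f̃_n ∈ Γ_{E'}. Then no convex block sequence of (f̃_n) converges pointwise on E. -/
/-!
The block functionals `cₙ = ∑_{i ∈ Fₙ} λᵢ f̃ᵢ` lie in the unit ball, so a pointwise limit `g` would
be a functional of norm `≤ 1`; disjointness of the blocks pushes them beyond every fixed `i`,
whence `g(aᵢ) = 0`. Then `hₙ = cₙ - g` tends to `0` pointwise, while every element of the closed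
convex hull of `{hₙ}` is `≥ ϑ` on `aᵢ` for large `i` and so has norm `≥ ϑ`. Simons' inequality,
available because every functional attains its norm on the unit ball, produces `b` in the unit
ball with `hₙ(b) ≥ ϑ / 2` for infinitely many `n`: a contradiction.
-/

open Filter Set Topology

theorem Convex.tsum_smul_mem {X : Type*} [AddCommGroup X] [Module ℝ X] [TopologicalSpace X]
    [IsTopologicalAddGroup X] [ContinuousSMul ℝ X] {S : Set X} (hS : Convex ℝ S)
    (hSc : IsClosed S) {w : ℕ → ℝ} {x : ℕ → X} (hw0 : ∀ k, 0 ≤ w k) (hw1 : HasSum w 1)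
    (hx : ∀ k, x k ∈ S) (hwx : Summable fun k => w k • x k) : ∑' k, w k • x k ∈ S := by
  have hT : Tendsto (fun n => (Finset.range n).centerMass w x) atTop (𝓝 (∑' k, w k • x k)) := by
    simpa [Finset.centerMass] using
      (hw1.tendsto_sum_nat.inv₀ one_ne_zero).smul hwx.hasSum.tendsto_sum_nat
  refine hSc.mem_of_tendsto hT ?_
  filter_upwards [hw1.tendsto_sum_nat.eventually (eventually_gt_nhds one_pos)] with n hn
  exact hS.centerMass_mem (fun k _ => hw0 k) hn fun k _ => hx k

theorem Set.Nonempty.exists_le_add {α : Type*} {S : Set α} (hS : S.Nonempty) {φ : α → ℝ}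
    (hφ : BddBelow (φ '' S)) {δ : ℝ} (hδ : 0 < δ) : ∃ x ∈ S, ∀ y ∈ S, φ x ≤ φ y + δ := by
  obtain ⟨_, ⟨x, hx, rfl⟩, hlt⟩ := Real.lt_sInf_add_pos (hS.image φ) hδ
  exact ⟨x, hx, fun y hy => hlt.le.trans (by gcongr; exact csInf_le hφ ⟨y, hy, rfl⟩)⟩

theorem Pairwise.eventually_forall_mem_lt {ι : Type*} {F : ι → Finset ℕ}
    (hF : Pairwise fun m n => Disjoint (F m) (F n)) (i : ℕ) :
    ∀ᶠ n in cofinite, ∀ j ∈ F n, i < j := by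
  have hfin : (⋃ j ∈ Iic i, {n | j ∈ F n}).Finite := by
    refine (finite_Iic i).biUnion fun j _ => Set.Subsingleton.finite fun m hm n hn => ?_
    by_contra hmn
    exact Finset.disjoint_left.mp (hF hmn) hm hn
  filter_upwards [hfin.eventually_cofinite_notMem] with n hn j hj
  by_contra! hji
  exact hn (mem_biUnion (mem_Iic.mpr hji) hj)

theorem le_two_pow_mul_sub {N ε : ℝ} {x : ℕ → ℝ} (h0 : x 0 = 0)
    (hstep : ∀ K, x (K + 1) ≤ (N + x K) / 2 + ε / 4 ^ (K + 1)) (K : ℕ) :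
    N - ε * (1 - (2 ^ K)⁻¹) ≤ 2 ^ K * (N - x K) := by
  induction K with
  | zero => simp [h0]
  | succ K ih =>
    set p : ℝ := 2 ^ K
    have hp : 0 < p := by positivity
    have hstep' : 2 * p * x (K + 1) ≤ p * (N + x K) + ε * p⁻¹ / 2 := by
      have h4 : (4 : ℝ) ^ (K + 1) = 2 * p * (2 * p) := by
        rw [show (4 : ℝ) = 2 * 2 by norm_num, mul_pow, pow_succ]; ring
      have := mul_le_mul_of_nonneg_left (hstep K) (by positivity : (0 : ℝ) ≤ 2 * p)
      rw [h4] at this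
      refine this.trans_eq ?_
      field_simp
    rw [pow_succ, mul_inv]
    linarith

section TailHull

variable {X : Type*} [AddCommGroup X] [Module ℝ X] [TopologicalSpace X]

def tailHull (h : ℕ → X) (k : ℕ) : Set X := closure (convexHull ℝ (h '' Ici k))

variable {h : ℕ → X}

theorem mem_tailHull {k n : ℕ} (hkn : k ≤ n) : h n ∈ tailHull h k :=
  subset_closure (subset_convexHull ℝ _ ⟨n, hkn, rfl⟩)

theorem tailHull_antitone : Antitone (tailHull h) := fun _ _ hkm =>
  closure_mono (convexHull_mono (image_mono (Ici_subset_Ici.mpr hkm)))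

theorem convex_tailHull [IsTopologicalAddGroup X] [ContinuousSMul ℝ X] (k : ℕ) :
    Convex ℝ (tailHull h k) :=
  (convex_convexHull ℝ _).closure

theorem tailHull_subset {k : ℕ} {T : Set X} (hT : IsClosed T) (hTc : Convex ℝ T)
    (hmem : ∀ n, k ≤ n → h n ∈ T) : tailHull h k ⊆ T :=
  closure_minimal (convexHull_min (by rintro _ ⟨n, hn, rfl⟩; exact hmem n hn) hTc) hT

end TailHull

theorem hasSum_inv_two_pow_succ : HasSum (fun k : ℕ => ((2 : ℝ) ^ (k + 1))⁻¹) 1 :=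
  (hasSum_geometric_two' 1).congr_fun fun k => by rw [pow_succ]; field_simp

section Simons

variable {Y : Type*} [NormedAddCommGroup Y] [NormedSpace ℝ Y]

theorem summable_inv_two_pow_succ_smul [CompleteSpace Y] {ξ : ℕ → Y} {M : ℝ}
    (hM : ∀ k, ‖ξ k‖ ≤ M) : Summable fun k => ((2 : ℝ) ^ (k + 1))⁻¹ • ξ k :=
  Summable.of_norm_bounded (hasSum_inv_two_pow_succ.summable.mul_right M) fun k => by
    rw [norm_smul, Real.norm_of_nonneg (by positivity)]
    exact mul_le_mul_of_nonneg_left (hM k) (by positivity)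

theorem Convex.norm_add_smul_le_half_add {S : Set Y} (hS : Convex ℝ S) {v U ξ : Y} {q δ : ℝ}
    (hq : 0 < q) (hξ : ξ ∈ S) (hw : q⁻¹ • (U - (v + q • ξ)) ∈ S)
    (hmin : ∀ η ∈ S, ‖v + q • ξ‖ ≤ ‖v + q • η‖ + δ) :
    ‖v + q • ξ‖ ≤ (‖U‖ + ‖v‖) / 2 + δ := by
  have hmid : v + q • ((2⁻¹ : ℝ) • ξ + (2⁻¹ : ℝ) • q⁻¹ • (U - (v + q • ξ)))
      = (2⁻¹ : ℝ) • (U + v) := by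
    rw [smul_add, smul_smul, smul_smul, smul_smul, show q * 2⁻¹ * q⁻¹ = 2⁻¹ by field_simp]
    module
  calc ‖v + q • ξ‖ ≤ ‖(2⁻¹ : ℝ) • (U + v)‖ + δ :=
        hmid ▸ hmin _ (hS hξ hw (by norm_num) (by norm_num) (by norm_num))
    _ ≤ (‖U‖ + ‖v‖) / 2 + δ := by
        rw [norm_smul, Real.norm_of_nonneg (by norm_num)]
        linarith [norm_add_le U v]

variable {C : ℕ → Set Y}

theorem two_pow_smul_tsum_sub_sum_mem [CompleteSpace Y] (hanti : Antitone C)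
    (hconv : ∀ k, Convex ℝ (C k)) (hcl : ∀ k, IsClosed (C k)) {ξ : ℕ → Y}
    (hξ : ∀ k, ξ k ∈ C k) {M : ℝ} (hM : ∀ k, ‖ξ k‖ ≤ M) (K : ℕ) :
    (2 ^ K : ℝ) • (∑' k, ((2 : ℝ) ^ (k + 1))⁻¹ • ξ k
      - ∑ k ∈ Finset.range K, ((2 : ℝ) ^ (k + 1))⁻¹ • ξ k) ∈ C K := by
  rw [← (summable_inv_two_pow_succ_smul hM).sum_add_tsum_nat_add K, add_sub_cancel_left,
    ← tsum_const_smul'']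
  have hweights : ∀ k, (2 : ℝ) ^ K * ((2 : ℝ) ^ (k + K + 1))⁻¹ = ((2 : ℝ) ^ (k + 1))⁻¹ := by
    intro k
    rw [show k + K + 1 = k + 1 + K by omega, pow_add]
    field_simp
  simp only [smul_smul, hweights]
  exact (hconv K).tsum_smul_mem (hcl K) (fun k => by positivity) hasSum_inv_two_pow_succ
    (fun k => hanti (by omega) (hξ (k + K))) (summable_inv_two_pow_succ_smul fun k => hM _)

/-- Simons' construction: `ξₖ ∈ Cₖ` almost minimises `‖uₖ + 2^{-(k+1)} ξ‖` over `Cₖ`, where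
`uₖ = ∑_{j<k} 2^{-(j+1)} ξⱼ`, and `U = ∑ 2^{-(k+1)} ξₖ`. The witness for `K` is `2^K (U - u_K)`;
testing near-minimality of `ξ_K` against its midpoint with the witness for `K + 1` halves the
gap `‖U‖ - ‖u_K‖` at each step, up to an error `ε / 4^(K+1)`. -/
theorem exists_norm_sub_le_two_pow_mul_norm_sub [CompleteSpace Y] (hanti : Antitone C)
    (hconv : ∀ k, Convex ℝ (C k)) (hcl : ∀ k, IsClosed (C k)) (hne : ∀ k, (C k).Nonempty)
    {M : ℝ} (hM : ∀ k, ∀ y ∈ C k, ‖y‖ ≤ M) {ε : ℝ} (hε : 0 < ε) :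
    ∃ U : Y, ∀ K, ∃ w ∈ C K, ‖U‖ - ε ≤ 2 ^ K * (‖U‖ - ‖U - ((2 : ℝ) ^ K)⁻¹ • w‖) := by
  have hstep : ∀ k (v : Y), ∃ ξ ∈ C k, ∀ η ∈ C k, ‖v + ((2 : ℝ) ^ (k + 1))⁻¹ • ξ‖
      ≤ ‖v + ((2 : ℝ) ^ (k + 1))⁻¹ • η‖ + ε / 4 ^ (k + 1) := fun k v =>
    (hne k).exists_le_add ⟨0, by rintro _ ⟨η, -, rfl⟩; exact norm_nonneg _⟩ (by positivity)
  choose! next hnext_mem hnext_min using hstep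
  let u : ℕ → Y := fun K => Nat.rec 0 (fun k v => v + ((2 : ℝ) ^ (k + 1))⁻¹ • next k v) K
  let ξ : ℕ → Y := fun k => next k (u k)
  have hu : ∀ K, u K = ∑ k ∈ Finset.range K, ((2 : ℝ) ^ (k + 1))⁻¹ • ξ k := by
    intro K
    induction K with
    | zero => rfl
    | succ K ih => rw [Finset.sum_range_succ, ← ih]
  set U := ∑' k, ((2 : ℝ) ^ (k + 1))⁻¹ • ξ k
  have htail : ∀ K, (2 ^ K : ℝ) • (U - u K) ∈ C K := fun K => hu K ▸
    two_pow_smul_tsum_sub_sum_mem hanti hconv hcl (fun k => hnext_mem k _)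
      (fun k => hM k _ (hnext_mem k _)) K
  have hhalf : ∀ K, ‖u (K + 1)‖ ≤ (‖U‖ + ‖u K‖) / 2 + ε / 4 ^ (K + 1) := fun K =>
    (hconv K).norm_add_smul_le_half_add (by positivity) (hnext_mem K _)
      (by rw [inv_inv]; exact hanti K.le_succ (htail (K + 1))) (hnext_min K _)
  refine ⟨U, fun K => ⟨_, htail K, ?_⟩⟩
  rw [smul_smul, inv_mul_cancel₀ (by positivity), one_smul, sub_sub_cancel]
  have hrate := le_two_pow_mul_sub (x := fun K => ‖u K‖) norm_zero hhalf K
  have hpos : 0 ≤ ε * ((2 : ℝ) ^ K)⁻¹ := by positivity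
  linarith

end Simons

section Dual

variable {E : Type*} [NormedAddCommGroup E] [NormedSpace ℝ E]

theorem ContinuousLinearMap.apply_le_norm (f : E →L[ℝ] ℝ) {x : E} (hx : ‖x‖ ≤ 1) :
    f x ≤ ‖f‖ :=
  (le_abs_self _).trans (f.unit_le_opNorm x hx)

theorem ContinuousLinearMap.norm_le_apply_of_forall_apply_le (f : E →L[ℝ] ℝ) {b : E}
    (hb : ∀ y : E, ‖y‖ ≤ 1 → f y ≤ f b) : ‖f‖ ≤ f b := by
  have h0 : 0 ≤ f b := by simpa using hb 0 (by simp)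
  refine f.opNorm_le_of_unit_norm h0 fun x hx => abs_le.2 ⟨?_, hb x hx.le⟩
  have := hb (-x) (by rw [norm_neg, hx])
  rw [map_neg] at this
  linarith

theorem exists_tendsto_apply_of_norm_le {F : Type*} [NormedAddCommGroup F] [NormedSpace ℝ F]
    {ι : Type*} {l : Filter ι} [l.NeBot] {c : ι → E →L[ℝ] F} {C : ℝ} (hc : ∀ n, ‖c n‖ ≤ C)
    (hlim : ∀ x, ∃ y, Tendsto (fun n => c n x) l (𝓝 y)) :
    ∃ g : E →L[ℝ] F, ‖g‖ ≤ C ∧ ∀ x, Tendsto (fun n => c n x) l (𝓝 (g x)) := by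
  choose g₀ hg₀ using hlim
  let g : E →ₗ[ℝ] F := linearMapOfTendsto g₀ (fun n => (c n : E →ₗ[ℝ] F)) (tendsto_pi_nhds.2 hg₀)
  have hbound : ∀ x, ‖g x‖ ≤ C * ‖x‖ := fun x =>
    le_of_tendsto (hg₀ x).norm (Eventually.of_forall fun n => (c n).le_of_opNorm_le (hc n) x)
  obtain ⟨n⟩ := l.nonempty_of_neBot
  exact ⟨g.mkContinuous C hbound,
    g.mkContinuous_norm_le ((norm_nonneg _).trans (hc n)) hbound, hg₀⟩

theorem le_norm_of_mem_tailHull {ι : Type*} {l : Filter ι} [l.NeBot] {x : ι → E}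
    (hx : ∀ i, ‖x i‖ ≤ 1) {h : ℕ → E →L[ℝ] ℝ} {r : ℝ} (hr : ∀ n, ∀ᶠ i in l, r ≤ h n (x i))
    {k : ℕ} : ∀ w ∈ tailHull h k, r ≤ ‖w‖ := by
  have hhull : convexHull ℝ (h '' Ici k) ⊆ {v | ∀ᶠ i in l, r ≤ v (x i)} := by
    refine convexHull_min (by rintro _ ⟨n, -, rfl⟩; exact hr n) fun v hv w hw s t hs ht hst => ?_
    filter_upwards [hv, hw] with i hvi hwi
    change r ≤ s * v (x i) + t * w (x i)
    have hcomb : s * r + t * r = r := by rw [← add_mul, hst, one_mul]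
    linarith [mul_le_mul_of_nonneg_left hvi hs, mul_le_mul_of_nonneg_left hwi ht]
  refine closure_minimal (hhull.trans fun v hv => ?_) (isClosed_le continuous_const continuous_norm)
  obtain ⟨i, hi⟩ := hv.exists
  exact hi.trans (v.apply_le_norm (hx i))

/-- Simons' inequality for a space whose functionals attain their norm on the unit ball. -/
theorem exists_frequently_sub_le_apply_of_le_norm
    (hsup : ∀ f : E →L[ℝ] ℝ, ∃ x : E, ‖x‖ ≤ 1 ∧ ∀ y : E, ‖y‖ ≤ 1 → f y ≤ f x)
    {h : ℕ → E →L[ℝ] ℝ} {M r ε : ℝ} (hM : ∀ n, ‖h n‖ ≤ M)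
    (hr : ∀ w ∈ tailHull h 0, r ≤ ‖w‖) (hε : 0 < ε) :
    ∃ b : E, ‖b‖ ≤ 1 ∧ ∃ᶠ n in atTop, r - ε ≤ h n b := by
  have hbdd : ∀ k, ∀ w ∈ tailHull h k, ‖w‖ ≤ M := fun k w hw => by
    simpa using tailHull_subset Metric.isClosed_closedBall (convex_closedBall 0 M)
      (fun n _ => by simpa using hM n) hw
  obtain ⟨U, hU⟩ := exists_norm_sub_le_two_pow_mul_norm_sub tailHull_antitone convex_tailHull
    (fun _ => isClosed_closure) (fun k => ⟨h k, mem_tailHull le_rfl⟩) hbdd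
    (by positivity : 0 < ε / 3)
  obtain ⟨b, hb, hbmax⟩ := hsup U
  have hUb := U.norm_le_apply_of_forall_apply_le hbmax
  have hUr : r - ε / 3 ≤ ‖U‖ := by
    obtain ⟨w, hw, hUw⟩ := hU 0
    simp only [pow_zero, inv_one, one_smul, one_mul] at hUw
    linarith [hr w hw, norm_sub_norm_le w U, norm_sub_rev w U]
  refine ⟨b, hb, frequently_atTop.2 fun K => ?_⟩
  obtain ⟨w, hw, hUw⟩ := hU K
  have hwb : ‖U‖ - ε / 3 ≤ w b := by
    have hv := (U - ((2 : ℝ) ^ K)⁻¹ • w).apply_le_norm hb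
    have hwb_eq : w b = 2 ^ K * (U b - (U - ((2 : ℝ) ^ K)⁻¹ • w) b) := by simp
    rw [hwb_eq]
    exact hUw.trans (mul_le_mul_of_nonneg_left (by linarith) (by positivity))
  by_contra! hK
  have hsub : tailHull h K ⊆ {v | v b ≤ r - ε} :=
    tailHull_subset (isClosed_le (ContinuousLinearMap.apply ℝ ℝ b).continuous continuous_const)
      (convex_halfSpace_le (ContinuousLinearMap.apply ℝ ℝ b).toLinearMap.isLinear _)
      fun n hn => (hK n hn).le
  linarith [show w b ≤ r - ε from hsub hw]

end Dual

theorem norm_sum_smul_le_one {ι V : Type*} [SeminormedAddCommGroup V] [NormedSpace ℝ V]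
    {s : Finset ι} {w : ι → ℝ} {f : ι → V} (hw0 : ∀ i ∈ s, 0 ≤ w i)
    (hw1 : ∑ i ∈ s, w i = 1) (hf : ∀ i ∈ s, ‖f i‖ ≤ 1) : ‖∑ i ∈ s, w i • f i‖ ≤ 1 := by
  simpa using (convex_closedBall (0 : V) 1).sum_mem hw0 hw1 fun i hi => by simpa using hf i hi

theorem le_sum_smul_apply {ι E : Type*} [NormedAddCommGroup E] [NormedSpace ℝ E]
    {s : Finset ι} {w : ι → ℝ} {f : ι → E →L[ℝ] ℝ} {x : E} {r : ℝ} (hw0 : ∀ i ∈ s, 0 ≤ w i)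
    (hw1 : ∑ i ∈ s, w i = 1) (hf : ∀ i ∈ s, r ≤ f i x) : r ≤ (∑ i ∈ s, w i • f i) x :=
  (convex_halfSpace_ge (ContinuousLinearMap.apply ℝ ℝ x).toLinearMap.isLinear r).sum_mem hw0 hw1 hf

/-- In a sup-reflexive space, no convex block sequence of the extensions of a
`ϑ`-triangular sequence converges pointwise. -/
theorem no_convex_block_pointwise_convergent {E : Type*}
    [NormedAddCommGroup E] [NormedSpace ℝ E]
    (hsup : ∀ f : E →L[ℝ] ℝ, ∃ x : E, ‖x‖ ≤ 1 ∧ ∀ y : E, ‖y‖ ≤ 1 → f y ≤ f x)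
    (ϑ : ℝ) (hϑ : 0 < ϑ) (a : ℕ → E) (ftilde : ℕ → E →L[ℝ] ℝ)
    (ha : ∀ n, ‖a n‖ ≤ 1) (hf : ∀ n, ‖ftilde n‖ ≤ 1)
    (htri0 : ∀ n i, i < n → ftilde n (a i) = 0)
    (htriϑ : ∀ n i, n ≤ i → ϑ ≤ ftilde n (a i)) :
    ¬ ∃ (F : ℕ → Finset ℕ) (lam : ℕ → ℝ),
      (Pairwise fun m n => Disjoint (F m) (F n)) ∧
      (∀ i, 0 ≤ lam i) ∧
      (∀ n, ∑ i ∈ F n, lam i = 1) ∧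
      (∀ x : E, ∃ l : ℝ,
        Tendsto (fun n => (∑ i ∈ F n, lam i • ftilde i) x) atTop (nhds l)) := by
  rintro ⟨F, lam, hdisj, hlam0, hlam1, hlim⟩
  set c : ℕ → E →L[ℝ] ℝ := fun n => ∑ i ∈ F n, lam i • ftilde i
  have hc : ∀ n, ‖c n‖ ≤ 1 := fun n =>
    norm_sum_smul_le_one (fun i _ => hlam0 i) (hlam1 n) fun i _ => hf i
  obtain ⟨g, hg, hcg⟩ := exists_tendsto_apply_of_norm_le hc hlim
  have hga : ∀ i, g (a i) = 0 := fun i => by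
    refine tendsto_nhds_unique (hcg (a i)) (tendsto_const_nhds.congr' ?_)
    filter_upwards [Nat.cofinite_eq_atTop ▸ hdisj.eventually_forall_mem_lt i] with n hn
    simpa [c] using (Finset.sum_eq_zero fun j hj => by simp [htri0 j i (hn j hj)]).symm
  set h : ℕ → E →L[ℝ] ℝ := fun n => c n - g
  have hh : ∀ n, ‖h n‖ ≤ 2 := fun n => (norm_sub_le _ _).trans (by linarith [hc n])
  have hha : ∀ n, ∀ᶠ i in atTop, ϑ ≤ h n (a i) := fun n => by
    filter_upwards [(eventually_all_finset (F n)).2 fun j _ => eventually_ge_atTop j] with i hi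
    simpa [h, c, hga] using
      le_sum_smul_apply (fun j _ => hlam0 j) (hlam1 n) fun j hj => htriϑ j i (hi j hj)
  obtain ⟨b, -, hb⟩ := exists_frequently_sub_le_apply_of_le_norm hsup hh
    (le_norm_of_mem_tailHull ha hha) (half_pos hϑ)
  have hb0 : Tendsto (fun n => h n b) atTop (𝓝 0) := tendsto_sub_nhds_zero_iff.2 (hcg b)
  exact hb ((hb0.eventually (gt_mem_nhds (half_pos hϑ))).mono fun n hn => not_le.2 (by linarith))
end

section
/- Let E be a normed space, (ω_n)_{n≥1} a sequence in the closed unit ball of E, (u_n) a sequence in (0,1/3) decreasing to 0, and ε_n = u_n/2^n. For n ≥ 1 define P_n = {f ∈ E' : f(ω_n) ≥ 1 - 3u_n and ‖f restricted to span{ω_1,…,ω_n}‖ ≤ 1 + ε_n} and Q_n = {f ∈ E' : f(ω_n) ≤ -1 + 3u_n and ‖f restricted to span{ω_1,…,ω_n}‖ ≤ 1 + ε_n}. Suppose the family (P_n, Q_n)_{n≥1} is independent: for all disjoint finite F, G ⊆ ℕ∖{0}, ⋂_{n∈F} P_n ∩ ⋂_{n∈G} Q_n ≠ ∅. Then for all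 n and all real λ_1,…,λ_n, ‖∑_{i=1}^n λ_i ω_i‖ ≥ ∑_{i=1}^n |λ_i| (1 - 3u_i)/(1 + ε_i); in particular (ω_n) is an asymptotically isometric copy of the canonical basis of ℓ¹(ℕ). -/
open Filter

/-- Independence of the pairs `(P_n, Q_n)` forces an asymptotically isometric `ℓ¹`
lower estimate. -/
theorem independent_pairs_asy_iso_l1 {E : Type*} [NormedAddCommGroup E] [NormedSpace ℝ E]
    (ω : ℕ → E) (u : ℕ → ℝ)
    (hω : ∀ n, 1 ≤ n → ‖ω n‖ ≤ 1)
    (hu : ∀ n, u n ∈ Set.Ioo (0:ℝ) (1/3))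
    (hu_anti : Antitone u) (hu_lim : Tendsto u atTop (nhds 0))
    (hindep : ∀ F G : Finset ℕ, Disjoint F G → 0 ∉ F → 0 ∉ G →
      ∃ f : E →L[ℝ] ℝ,
        (∀ n ∈ F, 1 - 3 * u n ≤ f (ω n) ∧
          ∀ x ∈ (Submodule.span ℝ (ω '' {i | 1 ≤ i ∧ i ≤ n}) : Set E),
            |f x| ≤ (1 + u n / 2 ^ n) * ‖x‖) ∧
        (∀ n ∈ G, f (ω n) ≤ -1 + 3 * u n ∧
          ∀ x ∈ (Submodule.span ℝ (ω '' {i | 1 ≤ i ∧ i ≤ n}) : Set E),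
            |f x| ≤ (1 + u n / 2 ^ n) * ‖x‖)) :
    ∀ (n : ℕ) (lam : ℕ → ℝ),
      ∑ i ∈ Finset.Icc 1 n, |lam i| * ((1 - 3 * u i) / (1 + u i / 2 ^ i)) ≤
        ‖∑ i ∈ Finset.Icc 1 n, lam i • ω i‖ := by
  intro n lam
  rcases Nat.eq_zero_or_pos n with rfl | hn
  · simp
  set S := Finset.Icc 1 n with hS
  have hnS : n ∈ S := Finset.mem_Icc.2 ⟨hn, le_rfl⟩
  set F := S.filter (fun i => 0 ≤ lam i) with hF
  set G := S.filter (fun i => ¬ 0 ≤ lam i) with hGdef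
  have hdisj : Disjoint F G := Finset.disjoint_filter_filter' S S disjoint_compl_right
  have h0S : (0 : ℕ) ∉ S := by simp [hS]
  obtain ⟨f, hPf, hQf⟩ := hindep F G hdisj
    (fun h => h0S (Finset.mem_filter.1 h).1) (fun h => h0S (Finset.mem_filter.1 h).1)
  set x := ∑ i ∈ S, lam i • ω i with hx
  have hxmem : x ∈ (Submodule.span ℝ (ω '' {i | 1 ≤ i ∧ i ≤ n}) : Set E) := by
    apply Submodule.sum_mem
    intro i hi
    rcases Finset.mem_Icc.1 hi with ⟨h1, h2⟩
    exact Submodule.smul_mem _ _ (Submodule.subset_span ⟨i, ⟨h1, h2⟩, rfl⟩)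
  -- norm bound at index n
  have hεpos : (0:ℝ) < 1 + u n / 2 ^ n := by
    have := (hu n).1
    positivity
  have hfx : f x ≤ (1 + u n / 2 ^ n) * ‖x‖ := by
    have hb : |f x| ≤ (1 + u n / 2 ^ n) * ‖x‖ := by
      by_cases h : 0 ≤ lam n
      · exact (hPf n (Finset.mem_filter.2 ⟨hnS, h⟩)).2 x hxmem
      · exact (hQf n (Finset.mem_filter.2 ⟨hnS, h⟩)).2 x hxmem
    exact (abs_le.1 hb).2
  -- lower bound for f x
  have hlow : ∑ i ∈ S, |lam i| * (1 - 3 * u i) ≤ f x := by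
    have : f x = ∑ i ∈ S, lam i * f (ω i) := by
      rw [hx, map_sum]
      simp [smul_eq_mul]
    rw [this]
    apply Finset.sum_le_sum
    intro i hi
    by_cases h : 0 ≤ lam i
    · have h1 := (hPf i (Finset.mem_filter.2 ⟨hi, h⟩)).1
      rw [abs_of_nonneg h]
      nlinarith
    · have h1 := (hQf i (Finset.mem_filter.2 ⟨hi, h⟩)).1
      rw [abs_of_neg (lt_of_not_ge h)]
      nlinarith
  -- compare denominators
  calc ∑ i ∈ S, |lam i| * ((1 - 3 * u i) / (1 + u i / 2 ^ i))
      ≤ ∑ i ∈ S, (|lam i| * (1 - 3 * u i)) / (1 + u n / 2 ^ n) := by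
        apply Finset.sum_le_sum
        intro i hi
        rcases Finset.mem_Icc.1 hi with ⟨h1, h2⟩
        rw [mul_div_assoc]
        apply mul_le_mul_of_nonneg_left _ (abs_nonneg _)
        apply div_le_div_of_nonneg_left _ hεpos
        · have hu1 : u n ≤ u i := hu_anti h2
          have h2p : (2:ℝ) ^ i ≤ 2 ^ n := pow_le_pow_right₀ one_le_two h2
          have : u n / 2 ^ n ≤ u i / 2 ^ i :=
            div_le_div₀ (hu i).1.le hu1 (pow_pos two_pos i) h2p
          linarith
        · have := (hu i).2
          linarith
    _ = (∑ i ∈ S, |lam i| * (1 - 3 * u i)) / (1 + u n / 2 ^ n) := by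
        rw [Finset.sum_div]
    _ ≤ f x / (1 + u n / 2 ^ n) := by
        exact div_le_div_of_nonneg_right hlow hεpos.le
    _ ≤ ‖x‖ := (div_le_iff₀ hεpos).2 (by linarith [hfx])
end

section
/- Let E be a normed space and suppose (f_n) is a bounded sequence in E' with no pointwise convergent subsequence (on E). Then there exist an infinite subset A ⊆ ℕ and M > 0 such that the subsequence (f_n)_{n∈A} satisfies M ∑_n |λ_n| ≤ ‖∑_n λ_n f_n‖ for every (λ_n) ∈ ℓ¹(ℕ) supported on A, i.e., (f_n)_{n∈A} is equivalent to the canonical basis of ℓ¹(ℕ). -/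
open Filter

/-!
For `r < s` let `Aₙ`, `Bₙ` be the points of the unit ball where `fₙ < r`, resp. `fₙ > s`.
Rosenthal's dichotomy: every infinite `S ⊆ ℕ` contains an infinite `Y` along which each point
leaves `Aₙ` or `Bₙ` for good, or an infinite `M` on which the pairs `(Aₙ, Bₙ)` are Boolean
independent. It is the open case of the Galvin–Prikry theorem, applied to the finite sets `t`
admitting a point that lies alternately in `A` and `B` along `t`; on the independent side,
inserting neighbouring indices realises every sign pattern.

If no rational `r < s` has an independent subsequence, a diagonal argument gives a subsequence
converging on the unit ball, hence everywhere. Otherwise, for `λ` supported on an independent `M`,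
points `x, y` of the ball following the signs of `λ` give
`(s - r) ∑ |λₙ| ≤ (∑ λₙ fₙ) x - (∑ λₙ fₙ) y ≤ 2 ‖∑ λₙ fₙ‖`.
-/

namespace Rosenthal

open Finset Topology

theorem exists_seq_of_forall_exists {α : Type*} (p : ℕ → α → Prop) (R : ℕ → α → α → Prop)
    {a : α} (ha : p 0 a) (h : ∀ n a, p n a → ∃ b, p (n + 1) b ∧ R n a b) :
    ∃ u : ℕ → α, u 0 = a ∧ ∀ n, p n (u n) ∧ R n (u n) (u (n + 1)) := by
  choose step hstep using h
  let v : (n : ℕ) → {x // p n x} := fun n =>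
    Nat.rec ⟨a, ha⟩ (fun n x => ⟨step n x x.2, (hstep n x x.2).1⟩) n
  exact ⟨fun n => (v n).1, rfl, fun n => ⟨(v n).2, (hstep n _ (v n).2).2⟩⟩

theorem exists_strictMono_forall_mem (Z : ℕ → Set ℕ) (hZ : ∀ k, (Z k).Infinite) :
    ∃ g : ℕ → ℕ, StrictMono g ∧ ∀ k, g k ∈ Z k := by
  obtain ⟨a, ha⟩ := (hZ 0).nonempty
  obtain ⟨g, -, hg⟩ := exists_seq_of_forall_exists (fun k b => b ∈ Z k) (fun _ b c => b < c) ha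
    fun k b _ => (hZ (k + 1)).exists_gt b
  exact ⟨g, strictMono_nat_of_lt_succ fun k => (hg k).2, fun k => (hg k).1⟩

theorem exists_subset_image_range {β : Type*} [DecidableEq β] {g : ℕ → β} {t : Finset β}
    (ht : ↑t ⊆ Set.range g) : ∃ k, t ⊆ (range k).image g := by
  rw [← Set.image_univ, Finset.subset_set_image_iff] at ht
  obtain ⟨t', -, rfl⟩ := ht
  obtain ⟨k, hk⟩ := t'.exists_nat_subset_range
  exact ⟨k, image_subset_image hk⟩

section Ramsey

variable (P : Finset ℕ → Prop)

/- Acceptance and rejection as in Galvin and Prikry's combinatorial forcing. -/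
def Accepts (s : Finset ℕ) (X : Set ℕ) : Prop :=
  ∀ g : ℕ → ℕ, StrictMono g → (∀ n, g n ∈ X) → ∃ k, P (s ∪ (range k).image g)

def Rejects (s : Finset ℕ) (X : Set ℕ) : Prop :=
  ∀ Y ⊆ X, Y.Infinite → ¬ Accepts P s Y

variable {P} {s : Finset ℕ} {X Y : Set ℕ}

theorem Rejects.mono (h : Rejects P s X) (hYX : Y ⊆ X) : Rejects P s Y :=
  fun Z hZY => h Z (hZY.trans hYX)

theorem Rejects.not_apply (h : Rejects P s X) (hX : X.Infinite) : ¬ P s :=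
  fun hs => h X subset_rfl hX fun _ _ _ => ⟨0, by simpa using hs⟩

theorem Accepts.exists_of_insert {g : ℕ → ℕ} (h : Accepts P (insert (g 0) s) X)
    (hg : StrictMono g) (hgX : ∀ j, g (j + 1) ∈ X) : ∃ k, P (s ∪ (range k).image g) := by
  obtain ⟨k, hk⟩ := h (fun j => g (j + 1)) (hg.comp (strictMono_id.add_const 1)) hgX
  refine ⟨k + 1, ?_⟩
  rwa [range_add_one', image_insert, map_eq_image, image_image, union_insert, ← insert_union]

theorem Rejects.exists_insert (hX : X.Infinite) (h : Rejects P s X) :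
    ∃ Y ⊆ X, Y.Infinite ∧ ∀ n ∈ Y, Rejects P (insert n s) Y := by
  -- Otherwise there are `nₖ < nₖ₊₁ ∈ Zₖ ⊇ Zₖ₊₁` with `Zₖ` accepting `insert nₖ s`, and then
  -- `{nₖ}` accepts `s`.
  by_contra! hc
  simp only [Rejects, not_forall, not_not, exists_prop] at hc
  obtain ⟨n₀, hn₀, Z₀, hZ₀, hZ₀i, hZ₀acc⟩ := hc X subset_rfl hX
  obtain ⟨u, -, hu⟩ := exists_seq_of_forall_exists
    (fun _ (q : ℕ × Set ℕ) => q.1 ∈ X ∧ q.2 ⊆ X ∧ q.2.Infinite ∧ Accepts P (insert q.1 s) q.2)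
    (fun _ q q' => q.1 < q'.1 ∧ q'.1 ∈ q.2 ∧ q'.2 ⊆ q.2) (a := (n₀, Z₀)) ⟨hn₀, hZ₀, hZ₀i, hZ₀acc⟩
    fun _ ⟨n, Z⟩ ⟨_, hZX, hZ, _⟩ => by
      obtain ⟨n', hn', Z', hZ', hZ'i, hZ'acc⟩ :=
        hc (Z \ Set.Iic n) (Set.sdiff_subset.trans hZX) (hZ.sdiff (Set.finite_Iic n))
      exact ⟨(n', Z'), ⟨hZX hn'.1, hZ'.trans (Set.sdiff_subset.trans hZX), hZ'i, hZ'acc⟩,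
        not_le.1 hn'.2, hn'.1, hZ'.trans Set.sdiff_subset⟩
  have hmono : StrictMono fun k => (u k).1 := strictMono_nat_of_lt_succ fun k => (hu k).2.1
  have hanti : Antitone fun k => (u k).2 := antitone_nat_of_succ_le fun k => (hu k).2.2.2
  have hmem : ∀ i j, i < j → (u j).1 ∈ (u i).2 := by
    rintro i (_ | j) hij
    · omega
    · exact hanti (Nat.le_of_lt_succ hij) (hu j).2.2.1
  refine h _ (Set.range_subset_iff.2 fun k => (hu k).1.1)
    (Set.infinite_range_of_injective hmono.injective) fun g hg hgu => ?_
  choose σ hσ using hgu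
  have hσmono : StrictMono σ := fun i j hij => hmono.lt_iff_lt.1 (by simpa [hσ] using hg hij)
  have hacc := (hu (σ 0)).1.2.2.2
  rw [show (u (σ 0)).1 = g 0 from hσ 0] at hacc
  refine hacc.exists_of_insert hg fun j => ?_
  rw [← hσ]
  exact hmem _ _ (hσmono j.succ_pos)

theorem Rejects.exists_forall_insert (𝒯 : Finset (Finset ℕ)) (hX : X.Infinite)
    (h : ∀ t ∈ 𝒯, Rejects P t X) :
    ∃ Y ⊆ X, Y.Infinite ∧ ∀ t ∈ 𝒯, ∀ n ∈ Y, Rejects P (insert n t) Y := by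
  induction 𝒯 using Finset.induction_on with
  | empty => exact ⟨X, subset_rfl, hX, by simp⟩
  | insert t 𝒯 _ ih =>
    obtain ⟨Y, hYX, hY, hYins⟩ := ih fun t' ht' => h t' (mem_insert_of_mem ht')
    obtain ⟨Z, hZY, hZ, hZins⟩ := ((h t (mem_insert_self t 𝒯)).mono hYX).exists_insert hY
    refine ⟨Z, hZY.trans hYX, hZ, forall_mem_insert _ _ _ |>.2 ⟨hZins, ?_⟩⟩
    exact fun t' ht' n hn => (hYins t' ht' n (hZY hn)).mono hZY

/- Nash-Williams' theorem, i.e. the Galvin–Prikry theorem for the open set of increasing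
sequences having an initial segment in `P`. -/
theorem exists_accepts_or_forall_not {S : Set ℕ} (hS : S.Infinite) :
    (∃ Y ⊆ S, Y.Infinite ∧ Accepts P ∅ Y) ∨
      ∃ M ⊆ S, M.Infinite ∧ ∀ t : Finset ℕ, ↑t ⊆ M → ¬ P t := by
  refine or_iff_not_imp_left.2 fun hacc => ?_
  have hrej : Rejects P ∅ S := fun Y hYS hY hYacc => hacc ⟨Y, hYS, hY, hYacc⟩
  -- States `(m, F, X)`: `F` holds the points chosen so far, `m` the last of them, and `X` rejects
  -- every subset of `F`.
  obtain ⟨u, hu₀, hu⟩ := exists_seq_of_forall_exists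
    (fun _ (q : ℕ × Finset ℕ × Set ℕ) => q.2.2 ⊆ S ∧ q.2.2.Infinite ∧ (∀ x ∈ q.2.2, q.1 < x) ∧
      ∀ t ⊆ q.2.1, Rejects P t q.2.2)
    (fun _ q q' => q'.1 ∈ q.2.2 ∧ q'.2.1 = insert q'.1 q.2.1) (a := (0, ∅, S \ Set.Iic 0))
    ⟨Set.sdiff_subset, hS.sdiff (Set.finite_Iic 0), fun x hx => not_le.1 hx.2,
      fun t ht => subset_empty.1 ht ▸ hrej.mono Set.sdiff_subset⟩
    fun _ ⟨_, F, X⟩ ⟨hXS, hX, _, hF⟩ => by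
      obtain ⟨Y, hYX, hY, hYins⟩ :=
        Rejects.exists_forall_insert F.powerset hX fun t ht => hF t (mem_powerset.1 ht)
      obtain ⟨m, hm⟩ := hY.nonempty
      refine ⟨(m, insert m F, Y \ Set.Iic m), ⟨Set.sdiff_subset.trans (hYX.trans hXS),
        hY.sdiff (Set.finite_Iic m), fun x hx => not_le.1 hx.2, fun t ht => ?_⟩, hYX hm, rfl⟩
      have hte : t.erase m ⊆ F := subset_insert_iff.1 ht
      by_cases hmt : m ∈ t
      · rw [← insert_erase hmt]
        exact (hYins _ (mem_powerset.2 hte) m hm).mono Set.sdiff_subset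
      · rw [← erase_eq_of_notMem hmt]
        exact (hF _ hte).mono (Set.sdiff_subset.trans hYX)
  set m : ℕ → ℕ := fun k => (u (k + 1)).1
  have hF : ∀ k, (u k).2.1 = (range k).image m := by
    intro k
    induction k with
    | zero => simp [hu₀]
    | succ k ih => rw [(hu k).2.2, ih, range_add_one, image_insert]
  have hmono : StrictMono m :=
    strictMono_nat_of_lt_succ fun k => (hu (k + 1)).1.2.2.1 _ (hu (k + 1)).2.1
  refine ⟨Set.range m, Set.range_subset_iff.2 fun k => (hu k).1.1 (hu k).2.1,
    Set.infinite_range_of_injective hmono.injective, fun t ht => ?_⟩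
  obtain ⟨k, hk⟩ := exists_subset_image_range ht
  exact ((hu k).1.2.2.2 t (hF k ▸ hk)).not_apply (hu k).1.2.1

end Ramsey

section Independence

variable {α : Type*} (A B : ℕ → Set α)

/- `x ∈ A n₀ ∩ B n₁ ∩ A n₂ ∩ ⋯` where `n₀ < n₁ < ⋯` enumerate `t`. -/
def Alternates (t : Finset ℕ) (x : α) : Prop :=
  ∀ n ∈ t, x ∈ if Even #{m ∈ t | m < n} then A n else B n

def BooleanIndependent (M : Set ℕ) : Prop :=
  ∀ F G : Finset ℕ, ↑F ⊆ M → ↑G ⊆ M → Disjoint F G →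
    ∃ x, (∀ n ∈ F, x ∈ A n) ∧ ∀ n ∈ G, x ∈ B n

theorem card_filter_lt_image_range {g : ℕ → ℕ} (hg : StrictMono g) {i k : ℕ} (hik : i < k) :
    #{m ∈ (range k).image g | m < g i} = i := by
  rw [filter_image, card_image_of_injective _ hg.injective]
  convert card_range i using 2
  ext j
  simp only [mem_filter, mem_range, hg.lt_iff_lt]
  omega

theorem finite_or_finite_of_accepts {Y : Set ℕ}
    (hY : Accepts (fun t => ¬ ∃ x, Alternates A B t x) ∅ Y) (x : α) :
    {n ∈ Y | x ∈ A n}.Finite ∨ {n ∈ Y | x ∈ B n}.Finite := by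
  by_contra! h
  obtain ⟨g, hg, hgmem⟩ := exists_strictMono_forall_mem
    (fun k => if Even k then {n ∈ Y | x ∈ A n} else {n ∈ Y | x ∈ B n})
    fun k => by split_ifs; exacts [h.1, h.2]
  have hgY : ∀ k, g k ∈ Y := fun k => by
    have := hgmem k
    split_ifs at this <;> exact this.1
  obtain ⟨k, hk⟩ := hY g hg hgY
  refine hk ⟨x, fun n hn => ?_⟩
  rw [empty_union] at hn ⊢
  obtain ⟨i, hi, rfl⟩ := mem_image.1 hn
  rw [card_filter_lt_image_range hg (mem_range.1 hi)]
  have := hgmem i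
  split_ifs at this ⊢ <;> exact this.2

theorem exists_alternating_pattern {g : ℕ → ℕ} (hg : StrictMono g) (p : ℕ → Prop) (b : ℕ) :
    ∃ t ⊆ (range (2 * b)).image g,
      ∀ k < b, g (2 * k + 1) ∈ t ∧ (Even #{m ∈ t | m < g (2 * k + 1)} ↔ p k) := by
  induction b with
  | zero => exact ⟨∅, empty_subset _, by simp⟩
  | succ b ih =>
    obtain ⟨t, ht, hpat⟩ := ih
    have hlt : ∀ m ∈ t, m < g (2 * b) := by
      intro m hm
      obtain ⟨j, hj, rfl⟩ := mem_image.1 (ht hm)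
      exact hg (by simpa using hj)
    -- pad with `g (2 * b)` when needed to put `g (2 * b + 1)` at a position of parity `p b`
    obtain ⟨D, htD, hDt, hD⟩ : ∃ D, t ⊆ D ∧ D ⊆ insert (g (2 * b)) t ∧ (Even #D ↔ p b) := by
      by_cases hpar : Even #t ↔ p b
      · exact ⟨t, subset_rfl, subset_insert _ _, hpar⟩
      · refine ⟨insert (g (2 * b)) t, subset_insert _ _, subset_rfl, ?_⟩
        rw [card_insert_of_notMem fun h => (hlt _ h).false, Nat.even_add_one]
        tauto
    have hDlt : ∀ m ∈ D, m < g (2 * b + 1) := fun m hm => by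
      rcases mem_insert.1 (hDt hm) with rfl | hm
      · exact hg (by omega)
      · exact (hlt m hm).trans (hg (by omega))
    refine ⟨insert (g (2 * b + 1)) D, insert_subset (mem_image_of_mem _ (mem_range.2 (by omega)))
      (hDt.trans (insert_subset (mem_image_of_mem _ (mem_range.2 (by omega)))
        (ht.trans (image_subset_image (range_subset_range.2 (by omega)))))), fun k hk => ?_⟩
    rcases Nat.lt_succ_iff_lt_or_eq.1 hk with hk | rfl
    · refine ⟨mem_insert_of_mem (htD (hpat k hk).1), ?_⟩
      convert (hpat k hk).2 using 3
      ext m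
      simp only [mem_filter, mem_insert]
      refine ⟨fun ⟨hm, hmk⟩ => ⟨?_, hmk⟩, fun ⟨hm, hmk⟩ => ⟨Or.inr (htD hm), hmk⟩⟩
      have hk' : ∀ j, 2 * b ≤ j → g (2 * k + 1) < g j := fun j hj => hg (by omega)
      rcases hm with rfl | hm
      · exact absurd hmk (hk' _ (by omega)).not_gt
      rcases mem_insert.1 (hDt hm) with rfl | hm
      · exact absurd hmk (hk' _ le_rfl).not_gt
      · exact hm
    · refine ⟨mem_insert_self _ _, ?_⟩
      rwa [filter_insert, if_neg (lt_irrefl _), filter_true_of_mem hDlt]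

theorem exists_booleanIndependent_of_forall_alternates {M : Set ℕ} (hM : M.Infinite)
    (h : ∀ t : Finset ℕ, ↑t ⊆ M → ∃ x, Alternates A B t x) :
    ∃ N : Set ℕ, N.Infinite ∧ BooleanIndependent A B N := by
  obtain ⟨g, hg, hgM⟩ := exists_strictMono_forall_mem (fun _ => M) fun _ => hM
  have hodd : StrictMono fun k => g (2 * k + 1) := hg.comp fun i j hij => by omega
  refine ⟨Set.range fun k => g (2 * k + 1), Set.infinite_range_of_injective hodd.injective,
    fun F G hF hG hFG => ?_⟩
  obtain ⟨b, hb⟩ := exists_subset_image_range (coe_union F G ▸ Set.union_subset hF hG)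
  obtain ⟨t, ht, hpat⟩ := exists_alternating_pattern hg (fun k => g (2 * k + 1) ∈ F) b
  obtain ⟨x, hx⟩ := h t fun n hn => by
    obtain ⟨j, -, rfl⟩ := mem_image.1 (ht hn)
    exact hgM j
  have hmem : ∀ n ∈ F ∪ G, x ∈ if n ∈ F then A n else B n := fun n hn => by
    obtain ⟨k, hk, rfl⟩ := mem_image.1 (hb hn)
    simpa only [(hpat k (mem_range.1 hk)).2] using hx _ (hpat k (mem_range.1 hk)).1
  refine ⟨x, fun n hn => ?_, fun n hn => ?_⟩
  · simpa only [if_pos hn] using hmem n (mem_union_left _ hn)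
  · simpa only [if_neg (disjoint_right.1 hFG hn)] using hmem n (mem_union_right _ hn)

theorem exists_finite_or_booleanIndependent {S : Set ℕ} (hS : S.Infinite) :
    (∃ Y ⊆ S, Y.Infinite ∧ ∀ x, {n ∈ Y | x ∈ A n}.Finite ∨ {n ∈ Y | x ∈ B n}.Finite) ∨
      ∃ M : Set ℕ, M.Infinite ∧ BooleanIndependent A B M := by
  refine (exists_accepts_or_forall_not hS).imp
    (fun ⟨Y, hYS, hY, hacc⟩ => ⟨Y, hYS, hY, finite_or_finite_of_accepts A B hacc⟩)
    fun ⟨M, _, hM, h⟩ => ?_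
  exact exists_booleanIndependent_of_forall_alternates A B hM fun t ht => not_not.1 (h t ht)

end Independence

theorem exists_strictMono_eventually_mem (Q : ℕ → Set ℕ → Prop)
    (hQ : ∀ i S, S.Infinite → ∃ Y ⊆ S, Y.Infinite ∧ Q i Y) :
    ∃ k : ℕ → ℕ, StrictMono k ∧ ∀ i, ∃ Y, Q i Y ∧ ∀ᶠ n in atTop, k n ∈ Y := by
  obtain ⟨Z, -, hZ⟩ := exists_seq_of_forall_exists (fun _ Z => Z.Infinite)
    (fun i Z Z' => Z' ⊆ Z ∧ Q i Z') Set.infinite_univ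
    fun i Z hZ => let ⟨Y, hYZ, hY, hQY⟩ := hQ i Z hZ; ⟨Y, hY, hYZ, hQY⟩
  have hanti : Antitone Z := antitone_nat_of_succ_le fun i => (hZ i).2.1
  obtain ⟨k, hk, hkZ⟩ := exists_strictMono_forall_mem (fun n => Z (n + 1)) fun n => (hZ (n + 1)).1
  exact ⟨k, hk, fun i => ⟨Z (i + 1), (hZ i).2.2,
    eventually_atTop.2 ⟨i, fun n hn => hanti (by omega) (hkZ n)⟩⟩⟩

theorem exists_tendsto_of_forall_rat {a : ℕ → ℝ} {C : ℝ} (ha : ∀ n, |a n| ≤ C)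
    (h : ∀ r s : ℚ, r < s → (∀ᶠ n in atTop, (r : ℝ) ≤ a n) ∨ ∀ᶠ n in atTop, a n ≤ s) :
    ∃ l, Tendsto a atTop (𝓝 l) := by
  have hle : IsBoundedUnder (· ≤ ·) atTop a := isBoundedUnder_of ⟨C, fun n => (abs_le.1 (ha n)).2⟩
  have hge : IsBoundedUnder (· ≥ ·) atTop a := isBoundedUnder_of ⟨-C, fun n => (abs_le.1 (ha n)).1⟩
  refine ⟨limsup a atTop, tendsto_of_liminf_eq_limsup ?_ rfl hle hge⟩
  refine (liminf_le_limsup hle hge).antisymm (not_lt.1 fun hlt => ?_)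
  obtain ⟨r, hr, hrs⟩ := exists_rat_btwn hlt
  obtain ⟨s, hrs, hs⟩ := exists_rat_btwn hrs
  rcases h r s (by exact_mod_cast hrs) with h' | h'
  · obtain ⟨n, h₁, h₂⟩ :=
      ((frequently_lt_of_liminf_lt hle.isCoboundedUnder_flip hr).and_eventually h').exists
    exact h₁.not_ge h₂
  · obtain ⟨n, h₁, h₂⟩ :=
      ((frequently_lt_of_lt_limsup hge.isCoboundedUnder_flip hs).and_eventually h').exists
    exact h₁.not_ge h₂

theorem exists_strictMono_tendsto_or_booleanIndependent {α : Type*} (u : ℕ → α → ℝ)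
    (hu : ∀ x, ∃ C, ∀ n, |u n x| ≤ C) :
    (∃ k : ℕ → ℕ, StrictMono k ∧ ∀ x, ∃ l, Tendsto (fun n => u (k n) x) atTop (𝓝 l)) ∨
      ∃ r s : ℝ, r < s ∧ ∃ M : Set ℕ, M.Infinite ∧
        BooleanIndependent (fun n => {x | u n x < r}) (fun n => {x | s < u n x}) M := by
  refine or_iff_not_imp_right.2 fun hind => ?_
  obtain ⟨e, he⟩ := exists_surjective_nat (ℚ × ℚ)
  have hQ : ∀ i (S : Set ℕ), S.Infinite → ∃ Y ⊆ S, Y.Infinite ∧ ((e i).1 < (e i).2 →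
      ∀ x, {n ∈ Y | u n x < (e i).1}.Finite ∨ {n ∈ Y | (e i).2 < u n x}.Finite) := by
    intro i S hS
    by_cases hlt : (e i).1 < (e i).2
    · obtain ⟨Y, hYS, hY, hfin⟩ := (exists_finite_or_booleanIndependent
        (fun n => {x | u n x < (e i).1}) (fun n => {x | (e i).2 < u n x}) hS).resolve_right
        fun ⟨M, hM, hMind⟩ => hind ⟨_, _, by exact_mod_cast hlt, M, hM, hMind⟩
      exact ⟨Y, hYS, hY, fun _ => hfin⟩
    · exact ⟨S, subset_rfl, hS, fun h => absurd h hlt⟩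
  obtain ⟨k, hk, hkY⟩ := exists_strictMono_eventually_mem _ hQ
  refine ⟨k, hk, fun x => ?_⟩
  obtain ⟨C, hC⟩ := hu x
  refine exists_tendsto_of_forall_rat (fun n => hC (k n)) fun r s hrs => ?_
  obtain ⟨i, hi⟩ := he (r, s)
  obtain ⟨Y, hYfin, hkY⟩ := hkY i
  rw [hi] at hYfin
  have hev : ∀ {p : ℕ → Prop}, {n ∈ Y | p n}.Finite → ∀ᶠ j in atTop, ¬ p (k j) := fun hfin => by
    filter_upwards [hkY, Nat.cofinite_eq_atTop ▸
      (hfin.preimage hk.injective.injOn).eventually_cofinite_notMem] with j hjY hj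
    exact fun hp => hj ⟨hjY, hp⟩
  exact (hYfin hrs x).imp (fun hfin => (hev hfin).mono fun _ => le_of_not_gt)
    fun hfin => (hev hfin).mono fun _ => le_of_not_gt

section Dual

variable {E : Type*} [NormedAddCommGroup E] [NormedSpace ℝ E]

theorem exists_tendsto_of_forall_norm_le_one {F : Type*} [NormedAddCommGroup F] [NormedSpace ℝ F]
    {g : ℕ → E →L[ℝ] F} (h : ∀ x, ‖x‖ ≤ 1 → ∃ l, Tendsto (fun n => g n x) atTop (𝓝 l)) (x : E) :
    ∃ l, Tendsto (fun n => g n x) atTop (𝓝 l) := by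
  have hc : 0 < ‖x‖ + 1 := by positivity
  obtain ⟨l, hl⟩ := h ((‖x‖ + 1)⁻¹ • x) <| by
    rw [norm_smul, Real.norm_of_nonneg (inv_nonneg.2 hc.le), inv_mul_le_iff₀ hc]
    linarith
  refine ⟨(‖x‖ + 1) • l, ?_⟩
  simpa [smul_inv_smul₀ hc.ne'] using hl.const_smul (‖x‖ + 1)

variable {f : ℕ → E →L[ℝ] ℝ} {r s : ℝ} {M : Set ℕ}

theorem sub_mul_sum_abs_le_two_mul_norm_sum
    (hind : BooleanIndependent (fun n => {x : Metric.closedBall (0 : E) 1 | f n x < r})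
      (fun n => {x | s < f n x}) M)
    {lam : ℕ → ℝ} (hlam : ∀ n ∉ M, lam n = 0) (F : Finset ℕ) :
    (s - r) * ∑ n ∈ F, |lam n| ≤ 2 * ‖∑ n ∈ F, lam n • f n‖ := by
  have hM : ∀ n, lam n ≠ 0 → n ∈ M := fun n => not_imp_comm.1 (hlam n)
  have hneg : ↑{n ∈ F | lam n < 0} ⊆ M := fun n hn => hM n (mem_filter.1 hn).2.ne
  have hpos : ↑{n ∈ F | 0 < lam n} ⊆ M := fun n hn => hM n (mem_filter.1 hn).2.ne'
  have hdisj : Disjoint {n ∈ F | lam n < 0} {n ∈ F | 0 < lam n} :=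
    disjoint_filter.2 fun _ _ h₁ h₂ => (h₁.trans h₂).false
  obtain ⟨x, hxA, hxB⟩ := hind _ _ hneg hpos hdisj
  obtain ⟨y, hyA, hyB⟩ := hind _ _ hpos hneg hdisj.symm
  have hterm : ∀ n ∈ F, (s - r) * |lam n| ≤ lam n * (f n x - f n y) := by
    intro n hn
    rcases lt_trichotomy (lam n) 0 with h | h | h
    · have h₁ : f n x < r := hxA n (mem_filter.2 ⟨hn, h⟩)
      have h₂ : s < f n y := hyB n (mem_filter.2 ⟨hn, h⟩)
      rw [abs_of_neg h]
      nlinarith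
    · simp [h]
    · have h₁ : s < f n x := hxB n (mem_filter.2 ⟨hn, h⟩)
      have h₂ : f n y < r := hyA n (mem_filter.2 ⟨hn, h⟩)
      rw [abs_of_pos h]
      nlinarith
  set T := ∑ n ∈ F, lam n • f n
  have hT : ∀ z : Metric.closedBall (0 : E) 1, ‖T z‖ ≤ ‖T‖ := fun z =>
    T.unit_le_opNorm z (mem_closedBall_zero_iff.1 z.2)
  calc (s - r) * ∑ n ∈ F, |lam n| ≤ ∑ n ∈ F, lam n * (f n x - f n y) := by
        rw [mul_sum]
        exact sum_le_sum hterm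
    _ = T x - T y := by simp [T, mul_sub]
    _ ≤ ‖T x‖ + ‖T y‖ := (Real.le_norm_self _).trans (norm_sub_le _ _)
    _ ≤ 2 * ‖T‖ := by linarith [hT x, hT y]

theorem mul_tsum_abs_le_norm_tsum {C : ℝ} (hbdd : ∀ n, ‖f n‖ ≤ C)
    (hind : BooleanIndependent (fun n => {x : Metric.closedBall (0 : E) 1 | f n x < r})
      (fun n => {x | s < f n x}) M)
    {lam : ℕ → ℝ} (hlam : ∀ n ∉ M, lam n = 0) (hsum : Summable lam) :
    (s - r) / 2 * ∑' n, |lam n| ≤ ‖∑' n, lam n • f n‖ := by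
  have hsmul : Summable fun n => lam n • f n :=
    (hsum.abs.mul_right C).of_norm_bounded fun n =>
      (norm_smul_le _ _).trans (mul_le_mul_of_nonneg_left (hbdd n) (abs_nonneg _))
  refine le_of_tendsto_of_tendsto' (hsum.abs.hasSum.const_mul ((s - r) / 2)) hsmul.hasSum.norm
    fun F => ?_
  linarith [sub_mul_sum_abs_le_two_mul_norm_sum hind hlam F]

end Dual

end Rosenthal

/-- Rosenthal's `ℓ¹`-theorem in the dual: a bounded sequence in `E'` with no pointwise
convergent subsequence has a subsequence equivalent to the canonical basis of `ℓ¹(ℕ)`. -/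
theorem rosenthal_dual {E : Type*} [NormedAddCommGroup E] [NormedSpace ℝ E]
    (f : ℕ → E →L[ℝ] ℝ) (C : ℝ) (hbdd : ∀ n, ‖f n‖ ≤ C)
    (hnoconv : ¬ ∃ k : ℕ → ℕ, StrictMono k ∧
      ∀ x : E, ∃ l : ℝ, Tendsto (fun n => f (k n) x) atTop (nhds l)) :
    ∃ A : Set ℕ, A.Infinite ∧ ∃ M : ℝ, 0 < M ∧
      ∀ lam : ℕ → ℝ, (∀ n ∉ A, lam n = 0) → Summable lam →
        M * ∑' n, |lam n| ≤ ‖∑' n, lam n • f n‖ := by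
  have hbound (x : Metric.closedBall (0 : E) 1) : ∃ B, ∀ n, |f n x| ≤ B :=
    ⟨C, fun n => ((f n).unit_le_opNorm x (mem_closedBall_zero_iff.1 x.2)).trans (hbdd n)⟩
  obtain ⟨r, s, hrs, M, hM, hind⟩ :=
    (Rosenthal.exists_strictMono_tendsto_or_booleanIndependent _ hbound).resolve_left
      fun ⟨k, hk, hconv⟩ => hnoconv ⟨k, hk, Rosenthal.exists_tendsto_of_forall_norm_le_one
        fun x hx => hconv ⟨x, mem_closedBall_zero_iff.2 hx⟩⟩
  exact ⟨M, hM, (s - r) / 2, by linarith, fun lam hlam hsum =>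
    Rosenthal.mul_tsum_abs_le_norm_tsum hbdd hind hlam hsum⟩
end

section
/- Let E be a normed space and (b_n) a normalized block sequence of a sequence (f_n) in Γ_{E'} that converges pointwise on E to some f ∈ E'. Suppose (a_n, f_n) is an extended ϑ-triangular sequence, let F_0 < F_1 < ⋯ be the supports of (b_n), and let d_n = max F_n. Then, setting h_n = (b_n - f)/2, the pair (a_{d_n}, h_n)_{n∈ℕ} is a (ϑ/2)-triangular sequence: h_n(a_{d_i}) = 0 for i < n, h_n(a_{d_i}) ≥ ϑ/2 for i ≥ n, and ‖h_n‖ ≤ 1. -/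
set_option maxHeartbeats 1000000

open Filter

/-- From a pointwise convergent convex block sequence of an extended `ϑ`-triangular
sequence, one obtains a `ϑ/2`-triangular sequence. -/
theorem half_triangular_from_block_limit {E : Type*}
    [NormedAddCommGroup E] [NormedSpace ℝ E]
    (ϑ : ℝ) (hϑ : 0 < ϑ) (a : ℕ → E) (f : ℕ → E →L[ℝ] ℝ)
    (ha : ∀ n, ‖a n‖ ≤ 1) (hf : ∀ n, ‖f n‖ ≤ 1)
    (htri0 : ∀ n i, i < n → f n (a i) = 0)
    (htriϑ : ∀ n i, n ≤ i → ϑ ≤ f n (a i))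
    (F : ℕ → Finset ℕ) (lam : ℕ → ℝ) (b : ℕ → E →L[ℝ] ℝ) (φ : E →L[ℝ] ℝ)
    (hFne : ∀ n, (F n).Nonempty)
    (hord : ∀ n, ∀ i ∈ F n, ∀ j ∈ F (n + 1), i < j)
    (hlam : ∀ i, 0 ≤ lam i)
    (hnorm : ∀ n, ∑ i ∈ F n, lam i = 1)
    (hblock : ∀ n, b n = ∑ i ∈ F n, lam i • f i)
    (hconv : ∀ x : E, Tendsto (fun n => b n x) atTop (nhds (φ x))) :
    (∀ n, ‖(2:ℝ)⁻¹ • (b n - φ)‖ ≤ 1) ∧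
    (∀ n i, i < n → ((2:ℝ)⁻¹ • (b n - φ)) (a ((F i).max' (hFne i))) = 0) ∧
    (∀ n i, n ≤ i → ϑ / 2 ≤ ((2:ℝ)⁻¹ • (b n - φ)) (a ((F i).max' (hFne i)))) := by
  -- strict ordering of supports
  have hord' : ∀ m n, m < n → ∀ i ∈ F m, ∀ j ∈ F n, i < j := by
    intro m n
    induction n with
    | zero => omega
    | succ n ih =>
      intro hmn i hi j hj
      rcases Nat.lt_succ_iff_lt_or_eq.mp hmn with h | h
      · obtain ⟨k, hk⟩ := hFne n
        exact (ih h i hi k hk).trans (hord n k hk j hj)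
      · subst h; exact hord m i hi j hj
  -- elements of F n are at least n
  have hge : ∀ n, ∀ j ∈ F n, n ≤ j := by
    intro n
    induction n with
    | zero => intro j _; exact Nat.zero_le _
    | succ n ih =>
      intro j hj
      obtain ⟨k, hk⟩ := hFne n
      have h1 := ih k hk
      have h2 := hord n k hk j hj
      omega
  -- φ vanishes on all a k
  have hφ0 : ∀ k, φ (a k) = 0 := by
    intro k
    have hev : (fun _ : ℕ => (0:ℝ)) =ᶠ[atTop] fun n => b n (a k) := by
      filter_upwards [eventually_ge_atTop (k + 1)] with n hn
      rw [hblock]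
      simp only [ContinuousLinearMap.coe_sum', Finset.sum_apply,
        ContinuousLinearMap.coe_smul', Pi.smul_apply]
      refine (Finset.sum_eq_zero fun j hj => ?_).symm
      have hkj : k < j := lt_of_lt_of_le hn (hge n j hj)
      rw [htri0 j k hkj, smul_zero]
    exact (tendsto_nhds_unique (tendsto_const_nhds.congr' hev) (hconv (a k))).symm
  -- norm bounds
  have hbn : ∀ n, ‖b n‖ ≤ 1 := by
    intro n
    rw [hblock]
    calc ‖∑ i ∈ F n, lam i • f i‖ ≤ ∑ i ∈ F n, ‖lam i • f i‖ := norm_sum_le _ _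
      _ ≤ ∑ i ∈ F n, lam i := by
          refine Finset.sum_le_sum fun i _ => ?_
          calc ‖lam i • f i‖ ≤ ‖lam i‖ * ‖f i‖ := ContinuousLinearMap.opNorm_smul_le _ _
            _ ≤ ‖lam i‖ * 1 := mul_le_mul_of_nonneg_left (hf i) (norm_nonneg _)
            _ = lam i := by rw [mul_one, Real.norm_eq_abs, abs_of_nonneg (hlam i)]
      _ = 1 := hnorm n
  have hφn : ‖φ‖ ≤ 1 := by
    refine ContinuousLinearMap.opNorm_le_bound φ zero_le_one fun x => ?_
    have habs : Tendsto (fun n => ‖b n x‖) atTop (nhds ‖φ x‖) := (hconv x).norm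
    refine le_of_tendsto habs (Eventually.of_forall fun n => ?_)
    calc ‖b n x‖ ≤ ‖b n‖ * ‖x‖ := (b n).le_opNorm x
      _ ≤ 1 * ‖x‖ := mul_le_mul_of_nonneg_right (hbn n) (norm_nonneg x)
  refine ⟨?_, ?_, ?_⟩
  · intro n
    calc ‖(2:ℝ)⁻¹ • (b n - φ)‖ ≤ ‖(2:ℝ)⁻¹‖ * ‖b n - φ‖ := ContinuousLinearMap.opNorm_smul_le _ _
      _ = (2:ℝ)⁻¹ * ‖b n - φ‖ := by rw [norm_inv, Real.norm_ofNat]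
      _ ≤ (2:ℝ)⁻¹ * (‖b n‖ + ‖φ‖) := by
          exact mul_le_mul_of_nonneg_left (norm_sub_le _ _) (by norm_num)
      _ ≤ (2:ℝ)⁻¹ * (1 + 1) := by
          exact mul_le_mul_of_nonneg_left (add_le_add (hbn n) hφn) (by norm_num)
      _ = 1 := by norm_num
  · intro n i hin
    set d := (F i).max' (hFne i) with hd
    have hdF : d ∈ F i := (F i).max'_mem (hFne i)
    have hb0 : b n (a d) = 0 := by
      rw [hblock]
      simp only [ContinuousLinearMap.coe_sum', Finset.sum_apply,
        ContinuousLinearMap.coe_smul', Pi.smul_apply]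
      refine Finset.sum_eq_zero fun j hj => ?_
      rw [htri0 j d (hord' i n hin d hdF j hj), smul_zero]
    simp [hb0, hφ0 d]
  · intro n i hni
    set d := (F i).max' (hFne i) with hd
    have hdF : d ∈ F i := (F i).max'_mem (hFne i)
    have hbϑ : ϑ ≤ b n (a d) := by
      rw [hblock]
      simp only [ContinuousLinearMap.coe_sum', Finset.sum_apply,
        ContinuousLinearMap.coe_smul', Pi.smul_apply]
      calc ϑ = ∑ j ∈ F n, lam j * ϑ := by
            rw [← Finset.sum_mul, hnorm n, one_mul]
        _ ≤ ∑ j ∈ F n, lam j • f j (a d) := by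
            refine Finset.sum_le_sum fun j hj => ?_
            have hjd : j ≤ d := by
              rcases eq_or_lt_of_le hni with h | h
              · subst h; exact (F n).le_max' j hj
              · exact (hord' n i h j hj d hdF).le
            exact mul_le_mul_of_nonneg_left (htriϑ j d hjd) (hlam j)
    have : ((2:ℝ)⁻¹ • (b n - φ)) (a d) = 2⁻¹ * b n (a d) := by
      simp [hφ0 d]
    rw [this]
    linarith
end
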